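/- arXiv:1505.02500 — 8 statements merged into one kernel-verified Lean document; each statement's English description precedes it below -/
import Mathlib

section
/- Let k, m ∈ ℕ with 1 ≤ k < m. Then there is a finite colouring of ℝ such that there does not exist an uncountable set X ⊆ ℝ with FS_k(X) ∪ FS_m(X) monochromatic. -/
open Cardinal

/-- `FS k X` is the set of sums of `k` distinct elements of `X`. -/
def FS (k : ℕ) (X : Set ℝ) : Set ℝ :=
  {y | ∃ F : Finset ℝ, ↑F ⊆ X ∧ F.card = k ∧ y = ∑ x ∈ F, x}

/-!
Colour `y` by `⌊log_b |y|⌋ mod 3` with `b = m / k`. An uncountable `X` has an accumulation point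
`a ∈ X` outside the countable set where `log_b |k a|` is an integer. Sums of `k` points of `X`
near `a` approximate `k a`, and sums of `m` of them approximate `m a = b (k a)`. Since
`log_b |k a|` is not an integer, the colouring is locally constant at `k a` and at `b (k a)`,
while these two points get colours `n mod 3` and `n + 1 mod 3`.
-/

open Set Filter Topology Real

theorem Set.exists_mem_accPt_of_not_countable {X : Type*} [TopologicalSpace X]
    [HereditarilyLindelofSpace X] {s : Set X} (hs : ¬ s.Countable) :
    ∃ x ∈ s, AccPt x (𝓟 s) := by
  by_contra! h
  exact hs ((HereditarilyLindelofSpace.isLindelof s).countable (discreteTopology_of_noAccPts h))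

theorem eq_of_eventually_eq_self_of_mem_closure {X α : Type*} [TopologicalSpace X] {f : X → α}
    {s : Set X} {x : X} {i : α} (hf : ∀ᶠ y in 𝓝 x, f y = f x) (hx : x ∈ closure s)
    (hs : ∀ y ∈ s, f y = i) : f x = i := by
  obtain ⟨y, hys, hyx⟩ := ((mem_closure_iff_frequently.mp hx).and_eventually hf).exists
  exact hyx ▸ hs y hys

theorem eventually_floor_eq {X R : Type*} [TopologicalSpace X] [Ring R] [LinearOrder R]
    [IsStrictOrderedRing R] [FloorRing R] [TopologicalSpace R] [OrderTopology R]
    {f : X → R} {x : X} (hf : ContinuousAt f x) (hx : f x ∉ range ((↑) : ℤ → R)) :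
    ∀ᶠ y in 𝓝 x, ⌊f y⌋ = ⌊f x⌋ := by
  have hlt : (⌊f x⌋ : R) < f x := (Int.floor_le _).lt_of_ne fun h => hx ⟨_, h⟩
  filter_upwards [hf.eventually (Ioo_mem_nhds hlt (Int.lt_floor_add_one _))] with y hy
  exact Int.floor_eq_iff.mpr ⟨hy.1.le, hy.2⟩

theorem natCast_mul_mem_closure_FS {X : Set ℝ} {a : ℝ} (ha : AccPt a (𝓟 X)) (j : ℕ) :
    (j : ℝ) * a ∈ closure (FS j X) := by
  rw [Metric.mem_closure_iff]
  intro ε hε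
  have hδ : 0 < ε / (j + 1) := by positivity
  have hinf : (X ∩ Metric.ball a (ε / (j + 1))).Infinite := by
    refine Set.Infinite.of_accPt (x := a) ?_
    rw [accPt_iff_frequently] at ha ⊢
    exact (ha.and_eventually (Metric.ball_mem_nhds a hδ)).mono
      fun y ⟨⟨hya, hyX⟩, hyb⟩ => ⟨hya, hyX, hyb⟩
  obtain ⟨F, hFX, hFcard⟩ := hinf.exists_subset_card_eq j
  refine ⟨∑ x ∈ F, x, ⟨F, hFX.trans inter_subset_left, hFcard, rfl⟩, ?_⟩
  calc dist ((j : ℝ) * a) (∑ x ∈ F, x) = dist (∑ x ∈ F, x) (∑ _x ∈ F, a) := by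
        rw [dist_comm, Finset.sum_const, hFcard, nsmul_eq_mul]
    _ ≤ ∑ x ∈ F, dist x a := dist_sum_sum_le F id fun _ => a
    _ ≤ ∑ _x ∈ F, ε / (j + 1) := Finset.sum_le_sum fun x hx => (hFX hx).2.le
    _ = j * (ε / (j + 1)) := by rw [Finset.sum_const, hFcard, nsmul_eq_mul]
    _ < ε := by
        rw [mul_div_assoc', div_lt_iff₀ (by positivity)]
        nlinarith

namespace Real

variable {b x : ℝ}

theorem logb_self_mul (hb : 1 < b) (hx : x ≠ 0) : logb b (b * x) = logb b x + 1 := by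
  rw [logb_mul (by positivity) hx, logb_self_eq_one hb, add_comm]

theorem countable_setOf_logb_mem_range_intCast (b_pos : 0 < b) (b_ne_one : b ≠ 1) :
    {y : ℝ | logb b y ∈ range ((↑) : ℤ → ℝ)}.Countable := by
  refine (((countable_range fun n : ℤ => b ^ n).union (countable_range fun n : ℤ => -b ^ n)).insert
    0).mono ?_
  rintro y ⟨n, hn⟩
  rcases eq_or_ne y 0 with rfl | hy
  · exact mem_insert _ _
  have habs : |y| = b ^ n := by
    rw [← rpow_logb_eq_abs b_pos b_ne_one hy, ← hn, rpow_intCast]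
  refine Or.inr ?_
  rcases abs_choice y with h | h
  · exact Or.inl ⟨n, habs.symm.trans h⟩
  · exact Or.inr ⟨n, by simp only [← habs, h, neg_neg]⟩

end Real

/-- `Real.logb b y` is `log_b |y|` for `y ≠ 0`, and `0` at `y = 0`. -/
noncomputable def logColour (b y : ℝ) : Fin 3 := (⌊logb b y⌋ : ZMod 3)

theorem logColour_self_mul_ne {b x : ℝ} (hb : 1 < b) (hx : x ≠ 0) :
    logColour b (b * x) ≠ logColour b x := by
  rw [logColour, logColour, logb_self_mul hb hx, Int.floor_add_one, Int.cast_add, Int.cast_one]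
  intro h
  exact absurd (add_eq_left.mp h) (by decide)

theorem logColour_eventually_eq {b x : ℝ} (hx : logb b x ∉ range ((↑) : ℤ → ℝ)) :
    ∀ᶠ y in 𝓝 x, logColour b y = logColour b x := by
  have hx0 : x ≠ 0 := by
    rintro rfl
    exact hx ⟨0, by rw [logb_zero, Int.cast_zero]⟩
  filter_upwards [eventually_floor_eq (continuousAt_logb hx0) hx] with y hy
  rw [logColour, logColour, hy]

theorem stmt_1 (k m : ℕ) (hk : 1 ≤ k) (hkm : k < m) :
    ∃ (n : ℕ) (c : ℝ → Fin n),
      ¬ ∃ X : Set ℝ, ℵ₁ ≤ #X ∧ ∃ i : Fin n, ∀ y ∈ FS k X ∪ FS m X, c y = i := by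
  have hk0 : (0 : ℝ) < k := by exact_mod_cast hk
  set b : ℝ := m / k
  have hb : 1 < b := (one_lt_div hk0).mpr (by exact_mod_cast hkm)
  refine ⟨3, logColour b, ?_⟩
  rintro ⟨X, hXcard, i, hmono⟩
  have hX : ¬ X.Countable := fun h =>
    (aleph0_lt_aleph_one.trans_le hXcard).not_ge (le_aleph0_iff_set_countable.mpr h)
  have hD : ((fun a => (k : ℝ) * a) ⁻¹' {y | logb b y ∈ range ((↑) : ℤ → ℝ)}).Countable :=
    (countable_setOf_logb_mem_range_intCast (by positivity) hb.ne').preimage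
      (mul_right_injective₀ hk0.ne')
  obtain ⟨a, ⟨-, hka⟩, hacc⟩ := exists_mem_accPt_of_not_countable fun h => hX (h.of_sdiff hD)
  replace hacc : AccPt a (𝓟 X) := hacc.mono (principal_mono.mpr sdiff_subset)
  have hka0 : (k : ℝ) * a ≠ 0 := fun h => hka ⟨0, by simp [h]⟩
  have hbka : logb b (b * (k * a)) ∉ range ((↑) : ℤ → ℝ) := by
    rintro ⟨n, hn⟩
    exact hka ⟨n - 1, by push_cast; linarith [logb_self_mul hb hka0]⟩
  have hik : logColour b (k * a) = i :=
    eq_of_eventually_eq_self_of_mem_closure (logColour_eventually_eq hka)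
      (natCast_mul_mem_closure_FS hacc k) fun y hy => hmono y (Or.inl hy)
  have him : logColour b (b * (k * a)) = i := by
    have hma : b * (k * a) = m * a := by
      simp only [b]
      field_simp
    refine eq_of_eventually_eq_self_of_mem_closure (logColour_eventually_eq hbka) ?_
      fun y hy => hmono y (Or.inr hy)
    exact hma ▸ natCast_mul_mem_closure_FS hacc m
  exact logColour_self_mul_ne hb hka0 (him.trans hik.symm)
end

section
/- Let k ∈ ℕ, k ≥ 2, and let p be a prime not dividing k. Let r = min{t ∈ ℕ : p^t > k} and U_p = {a ∈ ℤ : gcd(a,p) = 1}. Then there is a function ψ : U_p → {0,1,2} such that whenever a, y ∈ U_p and y ≡ k·a (mod p^r), we have ψ(a) ≠ ψ(y). -/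
/-!
Since `p ∤ k` and `1 < k < p ^ r`, multiplication by `k` is a nontrivial unit `g` of
`ZMod (p ^ r)`. Left multiplication by any `g ≠ 1` in a group splits the group into cycles
of length `orderOf g ≥ 2` (or bi-infinite chains), and a cycle of length at least two is
3-colourable; colour the integers prime to `p` by the colour of their residue.
-/

theorem ZMod.exists_coloring_add_one_ne {d : ℕ} (hd : d ≠ 1) :
    ∃ c : ZMod d → Fin 3, ∀ i, c (i + 1) ≠ c i := by
  match d, hd with
  | 0, _ =>
    refine ⟨fun i : ℤ => if Even i then 0 else 1, fun i : ℤ => ?_⟩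
    change (if Even (i + 1) then _ else _) ≠ _
    by_cases hi : Even i <;> simp [hi]
  | n + 2, _ =>
    -- colour `0, …, n` alternately by parity and the last residue `n + 1` by `2`
    let c : ℕ → Fin 3 := fun m => if m = n + 1 then 2 else if Even m then 0 else 1
    refine ⟨fun i : Fin (n + 2) => c i, fun i : Fin (n + 2) => ?_⟩
    change c ↑(i + 1) ≠ c i
    have hi := i.is_lt
    simp only [Fin.val_add_one, ← Fin.val_inj, Fin.val_last, c]
    split_ifs <;> simp_all [Nat.even_add_one]

theorem exists_zmod_orderOf_index {G : Type*} [Group G] (g : G) :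
    ∃ ι : G → ZMod (orderOf g), ∀ x, ι (g * x) = ι x + 1 := by
  -- `ι x` is the exponent `n` with `x = g ^ n * rep x`, where `rep x` is a fixed representative
  -- of the `⟨g⟩`-orbit of `x`; it is determined modulo `orderOf g`
  let R := MulAction.orbitRel (Subgroup.zpowers g) G
  let rep : G → G := fun x => (Quotient.mk R x).out
  have rep_mul (x : G) : rep (g * x) = rep x := by
    have : Quotient.mk R (g * x) = Quotient.mk R x :=
      Quotient.sound ⟨⟨g, Subgroup.mem_zpowers g⟩, rfl⟩
    simp only [rep, this]
  have exists_zpow (x : G) : ∃ n : ℤ, g ^ n * rep x = x := by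
    obtain ⟨⟨h, m, rfl⟩, hm⟩ : x ∈ MulAction.orbit _ (rep x) :=
      Quotient.exact (Quotient.out_eq (Quotient.mk R x)).symm
    exact ⟨m, hm⟩
  choose n hn using exists_zpow
  refine ⟨fun x => n x, fun x => ?_⟩
  have : g ^ n (g * x) = g ^ (n x + 1) := mul_right_cancel <|
    calc g ^ n (g * x) * rep x = g * x := by rw [← rep_mul, hn]
      _ = g ^ (n x + 1) * rep x := by rw [add_comm, zpow_one_add, mul_assoc, hn]
  rw [zpow_eq_zpow_iff_modEq, ← ZMod.intCast_eq_intCast_iff] at this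
  simpa using this

theorem exists_coloring_mul_left_ne {G : Type*} [Group G] {g : G} (hg : g ≠ 1) :
    ∃ f : G → Fin 3, ∀ x, f (g * x) ≠ f x := by
  obtain ⟨c, hc⟩ := ZMod.exists_coloring_add_one_ne (mt orderOf_eq_one_iff.mp hg)
  obtain ⟨ι, hι⟩ := exists_zmod_orderOf_index g
  exact ⟨c ∘ ι, fun x => by simpa only [Function.comp, hι] using hc (ι x)⟩

theorem ZMod.exists_coloring_intCast_mul_ne {n : ℕ} {k : ℤ} (hk : IsCoprime k n)
    (hk1 : (k : ZMod n) ≠ 1) :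
    ∃ ψ : ℤ → Fin 3, ∀ a y : ℤ, IsCoprime a n → IsCoprime y n →
      y ≡ k * a [ZMOD n] → ψ a ≠ ψ y := by
  classical
  have hg : ZMod.unitOfIsCoprime k hk ≠ 1 := fun h => hk1 (by simpa using congrArg Units.val h)
  obtain ⟨f, hf⟩ := exists_coloring_mul_left_ne hg
  refine ⟨fun a => if ha : IsCoprime a n then f (ZMod.unitOfIsCoprime a ha) else 0, ?_⟩
  intro a y ha hy hya
  have : ZMod.unitOfIsCoprime y hy = ZMod.unitOfIsCoprime k hk * ZMod.unitOfIsCoprime a ha := by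
    ext
    simpa using (ZMod.intCast_eq_intCast_iff _ _ _).mpr hya
  simpa only [dif_pos ha, dif_pos hy, this] using (hf _).symm

theorem stmt_3_general (k : ℕ) (hk : 2 ≤ k) (p : ℕ) (hp : p.Prime) (hpk : ¬ p ∣ k)
    (r : ℕ) (hr : k < p ^ r) :
    ∃ ψ : ℤ → Fin 3, ∀ a y : ℤ, IsCoprime a (p : ℤ) → IsCoprime y (p : ℤ) →
      y ≡ (k : ℤ) * a [ZMOD (p ^ r)] → ψ a ≠ ψ y := by
  have hcop : IsCoprime (k : ℤ) ((p ^ r : ℕ) : ℤ) := by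
    rw [Nat.isCoprime_iff_coprime]
    exact ((hp.coprime_iff_not_dvd.mpr hpk).pow_left r).symm
  have hk1 : ((k : ℤ) : ZMod (p ^ r)) ≠ 1 := by
    intro h
    have := congrArg ZMod.val h
    rw [Int.cast_natCast, ZMod.val_natCast_of_lt hr, ZMod.val_one_eq_one_mod,
      Nat.one_mod_eq_one.mpr (by omega)] at this
    omega
  obtain ⟨ψ, hψ⟩ := ZMod.exists_coloring_intCast_mul_ne hcop hk1
  refine ⟨ψ, fun a y ha hy hya => hψ a y ?_ ?_ ?_⟩
  · exact_mod_cast ha.pow_right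
  · exact_mod_cast hy.pow_right
  · exact_mod_cast hya

theorem stmt_3 (k : ℕ) (hk : 2 ≤ k) (p : ℕ) (hp : p.Prime) (hpk : ¬ p ∣ k)
    (r : ℕ) (hr : k < p ^ r) (hrmin : ∀ t : ℕ, 1 ≤ t → t < r → p ^ t ≤ k) (hr1 : 1 ≤ r) :
    ∃ ψ : ℤ → Fin 3, ∀ a y : ℤ, IsCoprime a (p : ℤ) → IsCoprime y (p : ℤ) →
      y ≡ (k : ℤ) * a [ZMOD (p ^ r)] → ψ a ≠ ψ y :=
  stmt_3_general k hk p hp hpk r hr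
end

section
/- Let k ≥ 2 and m ≥ 1 be natural numbers and let G = ℚ^m (the direct sum of m copies of ℚ). Then there is a colouring of G with 72 colours such that for every u ∈ G and every infinite subset X of G, there exists x ∈ X with the property that u + x and k·x (the sum of k copies of x) receive different colours. -/
/-!
Colour `x` by three invariants. For fixed `u`, each of them separates `u + x` from `k • x` unless
`x` is small in a corresponding sense, and the `x` that are small in all three senses have bounded
norm and denominators dividing a fixed integer, so there are finitely many of them.

* Size: multiplication by `k` adds exactly `1` to `t = log_k ‖x‖`, while for `‖x‖ > 8 ‖u‖` adding
  `u` moves `t` by less than `1/4`. Such a perturbation leaves `⌊t⌋` or `⌊t + 1/2⌋` unchanged,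
  whereas adding `1` flips the parity of both.
* Denominators prime to `k`: let `r ^ e` be the largest power of a prime `r ∤ k` occurring in the
  denominators of `x`. Multiplication by `k` permutes the classes of vectors with the same leading
  `r`-adic digits, without fixed points once the precision exceeds `v_r (k - 1)`, so a 3-colouring
  of this permutation separates `x` from `k • x`. If `r ^ e` is large compared to the denominators
  of `u`, then `u + x` has the same dominant prime power and the same leading digits as `x`.
* Denominators made of primes of `k`: `min_{p ∣ k} ⌊v_p(x) / v_p(k)⌋` grows by `1` under
  multiplication by `k`, and adding `u` does not change it once it is below its value at `u`;
  colour by its parity.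
-/

open MulAction Subgroup

namespace DilationColouring

/-! ### Three-colouring a permutation -/

def cycleColour {n : ℕ} (a : ZMod n) : Fin 3 :=
  if a.val + 1 = n then 2 else ⟨a.val % 2, by omega⟩

theorem cycleColour_add_one_ne {n : ℕ} {a : ZMod n} (h : a + 1 ≠ a) :
    cycleColour (a + 1) ≠ cycleColour a := by
  unfold cycleColour
  rcases n with _ | _ | n
  · have parity_ne (b : ℤ) : (b + 1).natAbs % 2 ≠ b.natAbs % 2 := by omega
    simp only [ZMod.val, Nat.add_one_ne_zero, if_false, ne_eq, Fin.mk.injEq]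
    exact parity_ne a
  · exact absurd (Subsingleton.elim (α := Fin 1) _ _) h
  · have hv := ZMod.val_lt a
    have hval : (a + 1).val = if a.val + 1 = n + 2 then 0 else a.val + 1 := by
      rw [ZMod.val_add, ZMod.val_one'' (by omega)]
      split_ifs with hn
      · simp [hn]
      · exact Nat.mod_eq_of_lt (by omega)
    simp only [hval, Ne, Fin.ext_iff]
    split_ifs <;> simp only [Fin.val_two] <;> omega

theorem orbitZPowersEquiv_perm_apply {α : Type*} (σ : Equiv.Perm α) {b y : α}
    (hy : y ∈ orbit (zpowers σ) b) (hσy : σ y ∈ orbit (zpowers σ) b) :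
    orbitZPowersEquiv σ b ⟨σ y, hσy⟩ = orbitZPowersEquiv σ b ⟨y, hy⟩ + 1 := by
  set j := orbitZPowersEquiv σ b ⟨y, hy⟩
  rw [← Equiv.eq_symm_apply, ← ZMod.intCast_zmod_cast j, ← Int.cast_one, ← Int.cast_add,
    orbitZPowersEquiv_symm_apply', add_comm, zpow_add, zpow_one, mul_smul,
    ← orbitZPowersEquiv_symm_apply', ZMod.intCast_zmod_cast, Equiv.symm_apply_apply]
  rfl

theorem _root_.Equiv.Perm.exists_colouring_fin_three {α : Type*} (σ : Equiv.Perm α) :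
    ∃ c : α → Fin 3, ∀ x, σ x ≠ x → c (σ x) ≠ c x := by
  classical
  let rep (x : α) : α := (Quotient.mk (orbitRel (zpowers σ) α) x).out
  have rep_perm (x : α) : rep (σ x) = rep x := congrArg Quotient.out
    (orbitRel.Quotient.quotient_smul_eq (g := (⟨σ, mem_zpowers σ⟩ : zpowers σ)))
  have mem_orbit_rep (x : α) : x ∈ orbit (zpowers σ) (rep x) :=
    mem_orbit_symm.mp (Quotient.mk_out (s := orbitRel (zpowers σ) α) x)
  let colour (b y : α) : Fin 3 :=
    if h : y ∈ orbit (zpowers σ) b then cycleColour (orbitZPowersEquiv σ b ⟨y, h⟩) else 0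
  refine ⟨fun x => colour (rep x) x, fun x hx => ?_⟩
  have hσx := mem_orbit_rep (σ x)
  rw [rep_perm] at hσx
  have hindex := orbitZPowersEquiv_perm_apply σ (mem_orbit_rep x) hσx
  simp only [colour, rep_perm, dif_pos hσx, dif_pos (mem_orbit_rep x), hindex]
  exact cycleColour_add_one_ne fun h =>
    hx (congrArg Subtype.val ((orbitZPowersEquiv σ (rep x)).injective (hindex.trans h)))

section Ultrametric

variable {E α : Type*} [AddGroup E] [LinearOrder α]

structure IsUltrametric (w : E → α) : Prop where
  map_neg : ∀ x, w (-x) = w x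
  min_le_map_add : ∀ x y, min (w x) (w y) ≤ w (x + y)

namespace IsUltrametric

variable {w : E → α}

theorem map_add_eq_of_lt (hw : IsUltrametric w) {u x : E} (h : w x < w u) :
    w (u + x) = w x := by
  refine le_antisymm ?_ (by simpa [min_eq_right h.le] using hw.min_le_map_add u x)
  have := hw.min_le_map_add (-u) (u + x)
  rw [neg_add_cancel_left, hw.map_neg] at this
  exact (min_le_iff.mp this).resolve_left h.not_ge

theorem comp {β : Type*} [LinearOrder β] (hw : IsUltrametric w) {f : α → β} (hf : Monotone f) :
    IsUltrametric (f ∘ w) where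
  map_neg x := by simp [hw.map_neg]
  min_le_map_add x y := hf.map_min.symm.trans_le (hf (hw.min_le_map_add x y))

theorem finset_inf {ι : Type*} [OrderTop α] (s : Finset ι) {w : ι → E → α}
    (hw : ∀ i ∈ s, IsUltrametric (w i)) : IsUltrametric fun x => s.inf fun i => w i x where
  map_neg x := Finset.inf_congr rfl fun i hi => (hw i hi).map_neg x
  min_le_map_add x y := Finset.le_inf fun i hi =>
    (min_le_min (Finset.inf_le hi) (Finset.inf_le hi)).trans ((hw i hi).min_le_map_add x y)

end IsUltrametric

end Ultrametric

noncomputable def halfParity (s : ℝ) : ZMod 2 × ZMod 2 := (⌊s⌋, ⌊s + 1 / 2⌋)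

theorem floor_eq_or_floor_add_half_eq {s t : ℝ} (h : |t - s| < 1 / 4) :
    ⌊t⌋ = ⌊s⌋ ∨ ⌊t + 1 / 2⌋ = ⌊s + 1 / 2⌋ := by
  rw [abs_lt] at h
  have hs₁ := Int.floor_le s
  have hs₂ := Int.lt_floor_add_one s
  by_cases hmid : ⌊s⌋ + 1 / 4 ≤ s ∧ s < ⌊s⌋ + 3 / 4
  · left
    rw [Int.floor_eq_iff]
    constructor <;> linarith
  · right
    rcases not_and_or.mp hmid with hlow | hhigh
    · have : ⌊s + 1 / 2⌋ = ⌊s⌋ := by rw [Int.floor_eq_iff]; constructor <;> linarith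
      rw [this, Int.floor_eq_iff]
      constructor <;> linarith
    · have : ⌊s + 1 / 2⌋ = ⌊s⌋ + 1 := by
        rw [Int.floor_eq_iff]; push_cast; constructor <;> linarith
      rw [this, Int.floor_eq_iff]
      push_cast
      constructor <;> linarith

theorem halfParity_ne_add_one {s t : ℝ} (h : |t - s| < 1 / 4) :
    halfParity t ≠ halfParity (s + 1) := by
  simp only [halfParity, add_right_comm s 1, Int.floor_add_one, Int.cast_add, Int.cast_one]
  rcases floor_eq_or_floor_add_half_eq h with h | h <;> rw [h] <;> simp

theorem abs_logb_sub_logb_lt {k a b : ℝ} (hk : 2 ≤ k) (ha : 0 < a) (hb : 8 * |b - a| < a) :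
    |Real.logb k b - Real.logb k a| < 1 / 4 := by
  have hb' : |b - a| < a / 8 := by linarith
  rw [abs_lt] at hb' ⊢
  have hb0 : 0 < b := by linarith
  have hlog2 := Real.log_two_gt_d9
  have hlogk : Real.log 2 ≤ Real.log k := Real.log_le_log (by norm_num) hk
  have hupper : Real.log (b / a) < 1 / 7 := by
    have := Real.log_le_sub_one_of_pos (div_pos hb0 ha)
    have : b / a < 9 / 8 := by rw [div_lt_iff₀ ha]; linarith
    linarith
  have hlower : -(1 / 7) < Real.log (b / a) := by
    have := Real.one_sub_inv_le_log_of_pos (div_pos hb0 ha)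
    have : (b / a)⁻¹ < 8 / 7 := by rw [inv_div, div_lt_iff₀ hb0]; linarith
    linarith
  rw [Real.log_div hb0.ne' ha.ne'] at hupper hlower
  rw [Real.logb, Real.logb, ← sub_div, lt_div_iff₀ (by linarith), div_lt_iff₀ (by linarith)]
  constructor <;> linarith

variable {ι : Type*} [Fintype ι]

/-! ### `p`-adic valuations of rational vectors -/

def ratVal (p : ℕ) (q : ℚ) : WithTop ℤ := if q = 0 then ⊤ else (padicValRat p q : WithTop ℤ)

theorem ratVal_of_ne_zero {p : ℕ} {q : ℚ} (hq : q ≠ 0) : ratVal p q = padicValRat p q :=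
  if_neg hq

theorem ratVal_eq_addValuation (p : ℕ) [Fact p.Prime] (q : ℚ) :
    ratVal p q = Padic.addValuation (q : ℚ_[p]) := by
  by_cases hq : q = 0
  · simp [ratVal, hq]
  · rw [ratVal_of_ne_zero hq, Padic.addValuation.apply (by exact_mod_cast hq),
      Padic.valuation_ratCast]

theorem ratVal_mul (p : ℕ) [Fact p.Prime] (q r : ℚ) :
    ratVal p (q * r) = ratVal p q + ratVal p r := by
  simp only [ratVal_eq_addValuation, Rat.cast_mul, AddValuation.map_mul]

theorem isUltrametric_ratVal (p : ℕ) [Fact p.Prime] : IsUltrametric (ratVal p) where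
  map_neg q := by simp only [ratVal_eq_addValuation, Rat.cast_neg, AddValuation.map_neg]
  min_le_map_add q r := by simp only [ratVal_eq_addValuation, Rat.cast_add, AddValuation.map_add]

theorem ratVal_natCast (p : ℕ) [hp : Fact p.Prime] {n : ℕ} (hn : n ≠ 0) :
    ratVal p n = ((n.factorization p : ℤ) : WithTop ℤ) := by
  rw [ratVal_of_ne_zero (by exact_mod_cast hn), padicValRat.of_nat, Nat.factorization_def _ hp.out]

def vecVal (p : ℕ) (x : ι → ℚ) : WithTop ℤ := Finset.univ.inf fun i => ratVal p (x i)

theorem vecVal_eq_top_iff {p : ℕ} {x : ι → ℚ} : vecVal p x = ⊤ ↔ x = 0 := by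
  simp [vecVal, Finset.inf_eq_top_iff, ratVal, funext_iff]

theorem le_vecVal_iff {p : ℕ} {x : ι → ℚ} {a : WithTop ℤ} :
    a ≤ vecVal p x ↔ ∀ i, a ≤ ratVal p (x i) := by
  simp [vecVal]

theorem isUltrametric_vecVal (p : ℕ) [Fact p.Prime] : IsUltrametric (vecVal (ι := ι) p) :=
  IsUltrametric.finset_inf _ fun i _ =>
    { map_neg := fun x => (isUltrametric_ratVal p).map_neg (x i)
      min_le_map_add := fun x y => (isUltrametric_ratVal p).min_le_map_add (x i) (y i) }

theorem vecVal_smul (p : ℕ) [Fact p.Prime] (c : ℚ) (x : ι → ℚ) :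
    vecVal p (c • x) = ratVal p c + vecVal p x := by
  simp only [vecVal, Pi.smul_apply, smul_eq_mul, ratVal_mul]
  exact (Finset.apply_inf_eq_inf_comp (ratVal p c + ·) (fun a b => (min_add_add_left _ _ _).symm)
    (WithTop.add_top _)).symm

def negPartNat (w : WithTop ℤ) : ℕ := (-w.untopD 0).toNat

theorem negPartNat_le_iff {w : WithTop ℤ} {n : ℕ} :
    negPartNat w ≤ n ↔ ((-n : ℤ) : WithTop ℤ) ≤ w := by
  induction w with
  | top => simp [negPartNat]
  | coe w => simp only [negPartNat, WithTop.untopD_coe, WithTop.coe_le_coe]; omega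

theorem neg_negPartNat_le (w : WithTop ℤ) : ((-negPartNat w : ℤ) : WithTop ℤ) ≤ w :=
  negPartNat_le_iff.mp le_rfl

theorem eq_neg_negPartNat {w : WithTop ℤ} (h : 0 < negPartNat w) :
    w = ((-negPartNat w : ℤ) : WithTop ℤ) := by
  induction w with
  | top => simp [negPartNat] at h
  | coe w => simp only [negPartNat, WithTop.untopD_coe, WithTop.coe_eq_coe] at h ⊢; omega

theorem negPartNat_antitone : Antitone negPartNat := fun _ _ h =>
  negPartNat_le_iff.mpr ((neg_negPartNat_le _).trans h)

theorem den_dvd_iff_forall_ratVal {q : ℚ} {L : ℕ} (hL : L ≠ 0) :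
    q.den ∣ L ↔ ∀ p, p.Prime → ((-L.factorization p : ℤ) : WithTop ℤ) ≤ ratVal p q := by
  rw [← Nat.factorization_prime_le_iff_dvd q.den_nz hL]
  refine forall₂_congr fun p hp => ?_
  by_cases hq : q = 0
  · simp [hq, ratVal]
  have hcop : padicValNat p q.den = 0 ∨ padicValInt p q.num = 0 := by
    by_cases hd : p ∣ q.den
    · exact .inr (padicValNat.eq_zero_of_not_dvd fun hn =>
        hp.one_lt.ne' (Nat.eq_one_of_dvd_coprimes q.reduced hn hd))
    · exact .inl (padicValNat.eq_zero_of_not_dvd hd)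
  rw [ratVal_of_ne_zero hq, WithTop.coe_le_coe, padicValRat_def, Nat.factorization_def _ hp,
    Nat.factorization_def _ hp]
  omega

theorem forall_den_dvd_iff {x : ι → ℚ} {L : ℕ} (hL : L ≠ 0) :
    (∀ i, (x i).den ∣ L) ↔
      ∀ p, p.Prime → ((-L.factorization p : ℤ) : WithTop ℤ) ≤ vecVal p x := by
  simp only [den_dvd_iff_forall_ratVal hL, le_vecVal_iff]
  exact ⟨fun h p hp i => h i p hp, fun h i p hp => h p hp i⟩

/-! ### The three colour components -/

noncomputable def sizeColour (k : ℕ) (x : ι → ℚ) : ZMod 2 × ZMod 2 :=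
  halfParity (Real.logb k ‖x‖)

theorem sizeColour_add_ne_smul {k : ℕ} (hk : 2 ≤ k) {u x : ι → ℚ} (h : 8 * ‖u‖ < ‖x‖) :
    sizeColour k (u + x) ≠ sizeColour k ((k : ℚ) • x) := by
  have hx : 0 < ‖x‖ := by linarith [norm_nonneg u]
  have hclose : 8 * |‖u + x‖ - ‖x‖| < ‖x‖ := by
    have := abs_norm_sub_norm_le (u + x) x
    rw [add_sub_cancel_right] at this
    linarith
  have hk' : (2 : ℝ) ≤ k := by exact_mod_cast hk
  have hsmul : Real.logb k ‖(k : ℚ) • x‖ = Real.logb k ‖x‖ + 1 := by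
    have hk_norm : ‖(k : ℚ)‖ = k := by rw [← Rat.norm_cast_real]; simp
    rw [norm_smul, hk_norm, Real.logb_mul (by positivity) hx.ne',
      Real.logb_self_eq_one (by linarith), add_comm]
  rw [sizeColour, sizeColour, hsmul]
  exact halfParity_ne_add_one (abs_logb_sub_logb_lt hk' hx hclose)

/-- The largest `n` such that `k ^ (-n) • x` has no prime factor of `k` in its denominators. -/
def kAdicVal (k : ℕ) (x : ι → ℚ) : WithTop ℤ :=
  k.primeFactors.inf fun p => (vecVal p x).map (· / (k.factorization p : ℤ))

theorem factorization_pos_of_mem_primeFactors {k p : ℕ} (hp : p ∈ k.primeFactors) :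
    0 < k.factorization p :=
  Nat.pos_of_ne_zero (Finsupp.mem_support_iff.mp (by rwa [Nat.support_factorization]))

theorem isUltrametric_kAdicVal (k : ℕ) : IsUltrametric (kAdicVal (ι := ι) k) :=
  IsUltrametric.finset_inf _ fun p hp =>
    haveI := Fact.mk (Nat.prime_of_mem_primeFactors hp)
    (isUltrametric_vecVal p).comp (Monotone.withTop_map fun _ _ h =>
      Int.ediv_le_ediv (by exact_mod_cast factorization_pos_of_mem_primeFactors hp) h)

theorem kAdicVal_smul (k : ℕ) (x : ι → ℚ) : kAdicVal k ((k : ℚ) • x) = kAdicVal k x + 1 := by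
  rw [kAdicVal, kAdicVal, Finset.apply_inf_eq_inf_comp (· + 1)
    (fun a b => (min_add_add_right a b 1).symm) (WithTop.top_add _)]
  refine Finset.inf_congr rfl fun p hp => ?_
  have := Fact.mk (Nat.prime_of_mem_primeFactors hp)
  have ha : (0 : ℤ) < k.factorization p := by
    exact_mod_cast factorization_pos_of_mem_primeFactors hp
  rw [Function.comp_apply, vecVal_smul, ratVal_natCast p (Nat.mem_primeFactors.mp hp).2.2]
  generalize vecVal p x = w
  induction w with
  | top => rfl
  | coe v =>
    change (((k.factorization p + v) / k.factorization p : ℤ) : WithTop ℤ) =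
      ((v / k.factorization p + 1 : ℤ) : WithTop ℤ)
    rw [Int.add_ediv_of_dvd_left dvd_rfl, Int.ediv_self ha.ne', add_comm]

theorem mul_factorization_le_vecVal {k p : ℕ} (hp : p ∈ k.primeFactors) {x : ι → ℚ} {n : ℤ}
    (h : (n : WithTop ℤ) ≤ kAdicVal k x) :
    ((n * k.factorization p : ℤ) : WithTop ℤ) ≤ vecVal p x := by
  have ha : (0 : ℤ) < k.factorization p := by
    exact_mod_cast factorization_pos_of_mem_primeFactors hp
  have h' := h.trans
    (Finset.inf_le (f := fun p => (vecVal p x).map (· / (k.factorization p : ℤ))) hp)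
  generalize vecVal p x = w at h' ⊢
  induction w with
  | top => exact le_top
  | coe v =>
    simp only [WithTop.map_coe, WithTop.coe_le_coe] at h' ⊢
    exact (Int.le_ediv_iff_mul_le ha).mp h'

def kAdicColour (k : ℕ) (x : ι → ℚ) : ZMod 2 := ((kAdicVal k x).untopD 0 : ℤ)

theorem kAdicColour_add_ne_smul {k : ℕ} {u x : ι → ℚ} (h : kAdicVal k x < kAdicVal k u) :
    kAdicColour k (u + x) ≠ kAdicColour k ((k : ℚ) • x) := by
  rw [kAdicColour, kAdicColour, (isUltrametric_kAdicVal k).map_add_eq_of_lt h, kAdicVal_smul]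
  obtain ⟨w, hw⟩ := WithTop.ne_top_iff_exists.mp h.ne_top
  rw [← hw, ← WithTop.coe_one, ← WithTop.coe_add, WithTop.untopD_coe, WithTop.untopD_coe]
  push_cast
  simp

/-- Multiplication by `c` permutes the classes of vectors agreeing in their leading `s` `p`-adic
digits; it has no fixed class other than that of `0`, because `c - 1` has valuation below `s`. -/
theorem exists_leadColouring (p : ℕ) [Fact p.Prime] {c : ℚ} (hc : c ≠ 0) {s : ℤ}
    (hs : ratVal p (c - 1) < s) (hs₀ : 0 < s) :
    ∃ col : (ι → ℚ) → Fin 3, (∀ x, x ≠ 0 → col (c • x) ≠ col x) ∧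
      ∀ u x, vecVal p x + s ≤ vecVal p u → col (u + x) = col x := by
  have hV := isUltrametric_vecVal (ι := ι) p
  have eq_of_close (a b : ι → ℚ) (h : vecVal p b + s ≤ vecVal p (a - b)) :
      vecVal p a = vecVal p b := by
    cases hb : vecVal p b with
    | top =>
      rw [hb, WithTop.top_add, top_le_iff, vecVal_eq_top_iff, sub_eq_zero] at h
      rw [h, hb]
    | coe v =>
      have hlt : vecVal p b < vecVal p (a - b) := by
        refine lt_of_lt_of_le ?_ h
        rw [hb, ← WithTop.coe_add, WithTop.coe_lt_coe]
        omega
      simpa [hb] using hV.map_add_eq_of_lt hlt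
  let S : Setoid (ι → ℚ) :=
    { r := fun a b => vecVal p b + s ≤ vecVal p (a - b)
      iseqv :=
        { refl := fun a => by simp [vecVal_eq_top_iff.mpr rfl]
          symm := fun {a b} h => by rwa [← neg_sub, hV.map_neg, eq_of_close a b h]
          trans := fun {a b d} h₁ h₂ => by
            rw [← sub_add_sub_cancel a b d]
            refine le_trans ?_ (hV.min_le_map_add _ _)
            rw [← eq_of_close b d h₂]
            exact le_min h₁ (by rwa [eq_of_close b d h₂]) } }
  have hcV : ratVal p c ≠ ⊤ := by simpa [ratVal] using hc
  let σ : Equiv.Perm (Quotient S) :=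
    Quotient.congr (MulAction.toPerm (Units.mk0 c hc)) fun a b => by
      change _ ↔ vecVal p (c • b) + s ≤ vecVal p (c • a - c • b)
      rw [← smul_sub, vecVal_smul, vecVal_smul, add_assoc, WithTop.add_le_add_iff_left hcV]
      rfl
  obtain ⟨col, hcol⟩ := σ.exists_colouring_fin_three
  refine ⟨fun x => col ⟦x⟧, fun x hx => hcol ⟦x⟧ fun h => ?_, fun u x h => ?_⟩
  · have hxV : vecVal p x ≠ ⊤ := by rwa [Ne, vecVal_eq_top_iff]
    have h' : vecVal p x + s ≤ vecVal p (c • x - x) := Quotient.exact h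
    rw [show c • x - x = (c - 1) • x by rw [sub_smul, one_smul], vecVal_smul,
      add_comm (ratVal p _), WithTop.add_le_add_iff_left hxV] at h'
    exact h'.not_gt hs
  · exact congrArg col
      (Quotient.sound (show vecVal p x + s ≤ vecVal p (u + x - x) by simpa using h))

structure IsLeadColouring (k r : ℕ) (col : (ι → ℚ) → Fin 3) : Prop where
  smul_ne : ∀ x, x ≠ 0 → col ((k : ℚ) • x) ≠ col x
  add_eq : ∀ u x, vecVal r x + ((k - 1).factorization r + 1 : ℤ) ≤ vecVal r u → col (u + x) = col x

theorem exists_isLeadColouring {k : ℕ} (hk : 2 ≤ k) :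
    ∃ c : ℕ → (ι → ℚ) → Fin 3, ∀ r, r.Prime → IsLeadColouring k r (c r) := by
  have hk1 : ((k : ℚ) - 1) = ((k - 1 : ℕ) : ℚ) := by
    push_cast [Nat.cast_sub (by omega : 1 ≤ k)]
    ring
  have (r : ℕ) : ∃ col : (ι → ℚ) → Fin 3, r.Prime → IsLeadColouring k r col := by
    by_cases hr : r.Prime
    · have := Fact.mk hr
      obtain ⟨col, h₁, h₂⟩ := exists_leadColouring (ι := ι) r (c := k) (by positivity)
        (s := (k - 1).factorization r + 1)
        (by rw [hk1, ratVal_natCast r (by omega), WithTop.coe_lt_coe]; omega) (by omega)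
      exact ⟨col, fun _ => ⟨h₁, h₂⟩⟩
    · exact ⟨fun _ => 0, fun h => absurd h hr⟩
  choose c hc using this
  exact ⟨c, hc⟩

def denProd (x : ι → ℚ) : ℕ := ∏ i, (x i).den

theorem denProd_ne_zero (x : ι → ℚ) : denProd x ≠ 0 :=
  Finset.prod_ne_zero_iff.mpr fun i _ => (x i).den_nz

theorem neg_factorization_denProd_le_vecVal {r : ℕ} (hr : r.Prime) (x : ι → ℚ) :
    ((-(denProd x).factorization r : ℤ) : WithTop ℤ) ≤ vecVal r x :=
  (forall_den_dvd_iff (denProd_ne_zero x)).mp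
    (fun i => Finset.dvd_prod_of_mem (fun i => (x i).den) (Finset.mem_univ i)) r hr

/-- The largest exponent of `r` in a denominator of `x`. -/
def denExp (r : ℕ) (x : ι → ℚ) : ℕ := negPartNat (vecVal r x)

theorem denExp_le_factorization_denProd {r : ℕ} (hr : r.Prime) (x : ι → ℚ) :
    denExp r x ≤ (denProd x).factorization r :=
  negPartNat_le_iff.mpr (neg_factorization_denProd_le_vecVal hr x)

theorem pow_denExp_le_denProd {r : ℕ} (hr : r.Prime) (x : ι → ℚ) :
    r ^ denExp r x ≤ denProd x :=
  (Nat.pow_le_pow_right hr.pos (denExp_le_factorization_denProd hr x)).trans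
    (Nat.ordProj_le r (denProd_ne_zero x))

theorem denExp_add_le (r : ℕ) [Fact r.Prime] (u x : ι → ℚ) :
    denExp r (u + x) ≤ max (denExp r u) (denExp r x) :=
  negPartNat_antitone.map_min ▸ negPartNat_antitone ((isUltrametric_vecVal r).min_le_map_add u x)

theorem denExp_natCast_smul {k r : ℕ} (hk : k ≠ 0) [Fact r.Prime] (hrk : ¬ r ∣ k)
    (x : ι → ℚ) : denExp r ((k : ℚ) • x) = denExp r x := by
  rw [denExp, denExp, vecVal_smul, ratVal_natCast r hk, Nat.factorization_eq_zero_of_not_dvd hrk,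
    Nat.cast_zero, WithTop.coe_zero, zero_add]

def maxPrimePow (k : ℕ) (x : ι → ℚ) : ℕ :=
  ((denProd x).primeFactors.filter (¬ · ∣ k)).sup fun r => r ^ denExp r x

/-- The prime `r` with `maxPrimePow k x = r ^ denExp r x`, recovered as the least prime factor. -/
noncomputable def leadPrime (k : ℕ) (x : ι → ℚ) : ℕ := (maxPrimePow k x).minFac

theorem pow_denExp_le_maxPrimePow {k r : ℕ} (hr : r.Prime) (hrk : ¬ r ∣ k) {x : ι → ℚ}
    (he : 0 < denExp r x) : r ^ denExp r x ≤ maxPrimePow k x := by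
  refine Finset.le_sup (f := fun r => r ^ denExp r x) (Finset.mem_filter.mpr ⟨?_, hrk⟩)
  exact hr.mem_primeFactors (Nat.dvd_of_factorization_pos
    (by have := denExp_le_factorization_denProd hr x; omega)) (denProd_ne_zero x)

theorem maxPrimePow_le {k B : ℕ} {x : ι → ℚ} (hB : 1 ≤ B)
    (h : ∀ r, r.Prime → ¬ r ∣ k → 0 < denExp r x → r ^ denExp r x ≤ B) :
    maxPrimePow k x ≤ B := by
  refine Finset.sup_le fun r hr => ?_
  obtain ⟨hr₁, hr₂⟩ := Finset.mem_filter.mp hr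
  rcases Nat.eq_zero_or_pos (denExp r x) with he | he
  · simpa [he] using hB
  · exact h r (Nat.prime_of_mem_primeFactors hr₁) hr₂ he

theorem exists_pow_denExp_eq_maxPrimePow {k : ℕ} {x : ι → ℚ} (h : 2 ≤ maxPrimePow k x) :
    ∃ r, r.Prime ∧ ¬ r ∣ k ∧ 0 < denExp r x ∧ r ^ denExp r x = maxPrimePow k x := by
  have hne : ((denProd x).primeFactors.filter (¬ · ∣ k)).Nonempty := by
    by_contra hempty
    simp [maxPrimePow, Finset.not_nonempty_iff_eq_empty.mp hempty] at h
  obtain ⟨r, hr, hmax⟩ := Finset.exists_mem_eq_sup _ hne fun r => r ^ denExp r x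
  obtain ⟨hr₁, hr₂⟩ := Finset.mem_filter.mp hr
  refine ⟨r, Nat.prime_of_mem_primeFactors hr₁, hr₂, Nat.pos_of_ne_zero fun he => ?_, hmax.symm⟩
  rw [maxPrimePow, hmax, he, pow_zero] at h
  omega

theorem maxPrimePow_eq_of_le {k r : ℕ} (hr : r.Prime) (hrk : ¬ r ∣ k) {x y : ι → ℚ}
    (hpos : 0 < denExp r x) (hrM : r ^ denExp r x = maxPrimePow k x)
    (hy : denExp r y = denExp r x)
    (hle : ∀ s, s.Prime → ¬ s ∣ k → 0 < denExp s y → s ^ denExp s y ≤ maxPrimePow k x) :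
    maxPrimePow k y = maxPrimePow k x := by
  refine le_antisymm (maxPrimePow_le (hrM ▸ Nat.one_le_pow _ _ hr.pos) hle) ?_
  rw [← hrM, ← hy]
  exact pow_denExp_le_maxPrimePow hr hrk (hy ▸ hpos)

theorem vecVal_add_le_of_le_pow {k r e : ℕ} (hk : 2 ≤ k) (hr : r.Prime) {u x : ι → ℚ}
    (hx : vecVal r x = ((-e : ℤ) : WithTop ℤ)) (he : k * denProd u ≤ r ^ e) :
    vecVal r x + ((k - 1).factorization r + 1 : ℤ) ≤ vecVal r u := by
  have hlt : (denProd u).factorization r + (k - 1).factorization r < e := by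
    rw [← Nat.pow_lt_pow_iff_right hr.one_lt, pow_add]
    calc r ^ _ * r ^ _ ≤ denProd u * (k - 1) :=
          Nat.mul_le_mul (Nat.ordProj_le r (denProd_ne_zero u)) (Nat.ordProj_le r (by omega))
      _ < k * denProd u := by
          rw [mul_comm]
          exact Nat.mul_lt_mul_of_pos_right (by omega) (Nat.pos_of_ne_zero (denProd_ne_zero u))
      _ ≤ r ^ e := he
  refine le_trans ?_ (neg_factorization_denProd_le_vecVal hr u)
  rw [hx, ← WithTop.coe_add, WithTop.coe_le_coe]
  omega

theorem maxPrimePow_natCast_smul {k : ℕ} (hk : k ≠ 0) {x : ι → ℚ} (hM : 2 ≤ maxPrimePow k x) :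
    maxPrimePow k ((k : ℚ) • x) = maxPrimePow k x := by
  obtain ⟨r, hr, hrk, he, hrM⟩ := exists_pow_denExp_eq_maxPrimePow hM
  have := Fact.mk hr
  refine maxPrimePow_eq_of_le hr hrk he hrM (denExp_natCast_smul hk hrk x) fun s hs hsk hpos => ?_
  have := Fact.mk hs
  rw [denExp_natCast_smul hk hsk x] at hpos ⊢
  exact pow_denExp_le_maxPrimePow hs hsk hpos

theorem maxPrimePow_add_eq {k r : ℕ} (hr : r.Prime) (hrk : ¬ r ∣ k) {u x : ι → ℚ}
    (he : 0 < denExp r x) (hrM : r ^ denExp r x = maxPrimePow k x)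
    (hlt : vecVal r x < vecVal r u) (hu : denProd u ≤ maxPrimePow k x) :
    maxPrimePow k (u + x) = maxPrimePow k x := by
  have := Fact.mk hr
  refine maxPrimePow_eq_of_le hr hrk he hrM
    (by rw [denExp, (isUltrametric_vecVal r).map_add_eq_of_lt hlt, denExp])
    fun s hs hsk hpos => ?_
  have := Fact.mk hs
  rcases le_max_iff.mp (denExp_add_le s u x) with hsu | hsx
  · exact (Nat.pow_le_pow_right hs.pos hsu).trans ((pow_denExp_le_denProd hs u).trans hu)
  · exact (Nat.pow_le_pow_right hs.pos hsx).trans (pow_denExp_le_maxPrimePow hs hsk (by omega))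

theorem leadColour_add_ne_smul {k : ℕ} (hk : 2 ≤ k) {c : ℕ → (ι → ℚ) → Fin 3}
    (hc : ∀ r, r.Prime → IsLeadColouring k r (c r)) {u x : ι → ℚ}
    (h : k * denProd u ≤ maxPrimePow k x) :
    c (leadPrime k (u + x)) (u + x) ≠ c (leadPrime k ((k : ℚ) • x)) ((k : ℚ) • x) := by
  have hu := Nat.pos_of_ne_zero (denProd_ne_zero u)
  have hM : 2 ≤ maxPrimePow k x := le_trans (by nlinarith) h
  obtain ⟨r, hr, hrk, he, hrM⟩ := exists_pow_denExp_eq_maxPrimePow hM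
  have hx : vecVal r x = ((-denExp r x : ℤ) : WithTop ℤ) := eq_neg_negPartNat he
  have hclose := vecVal_add_le_of_le_pow hk hr hx (hrM ▸ h)
  have hlt : vecVal r x < vecVal r u := lt_of_lt_of_le
    (by rw [hx, ← WithTop.coe_add, WithTop.coe_lt_coe]; omega) hclose
  have hlead (y : ι → ℚ) (hy : maxPrimePow k y = maxPrimePow k x) : leadPrime k y = r := by
    rw [leadPrime, hy, ← hrM, hr.pow_minFac he.ne']
  have hx0 : x ≠ 0 := by
    rintro rfl
    exact WithTop.top_ne_coe ((vecVal_eq_top_iff.mpr rfl).symm.trans hx)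
  have hMux := maxPrimePow_add_eq hr hrk he hrM hlt ((Nat.le_mul_of_pos_left _ (by omega)).trans h)
  rw [hlead _ hMux, hlead _ (maxPrimePow_natCast_smul (by omega) hM), (hc r hr).add_eq u x hclose]
  exact ((hc r hr).smul_ne x hx0).symm

/-! ### Finiteness of the exceptional set -/

theorem finite_setOf_rat_norm_le_den_dvd (C : ℝ) {L : ℕ} (hL : L ≠ 0) :
    {q : ℚ | ‖q‖ ≤ C ∧ q.den ∣ L}.Finite := by
  refine ((Set.finite_Icc (-⌈C * L⌉) ⌈C * L⌉).image fun n : ℤ => (n : ℚ) / L).subset ?_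
  rintro q ⟨hq, d, hd⟩
  set n : ℤ := q.num * d
  have hn : (n : ℚ) = q * L := by
    rw [hd, Nat.cast_mul, ← mul_assoc, Rat.mul_den_eq_num]
    push_cast [n]
    rfl
  have hnR : (n : ℝ) = (q : ℝ) * L := by rw [← Rat.cast_intCast, hn]; push_cast; rfl
  have hbound : |(n : ℝ)| ≤ C * L := by
    rw [hnR, abs_mul, Nat.abs_cast, ← Real.norm_eq_abs, Rat.norm_cast_real]
    exact mul_le_mul_of_nonneg_right hq (Nat.cast_nonneg L)
  rw [abs_le] at hbound
  have hceil := Int.le_ceil (C * L)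
  refine ⟨n, ⟨?_, ?_⟩, ?_⟩
  · have : ((-⌈C * L⌉ : ℤ) : ℝ) ≤ n := by push_cast; linarith
    exact_mod_cast this
  · have : (n : ℝ) ≤ ⌈C * L⌉ := by linarith
    exact_mod_cast this
  · change (n : ℚ) / L = q
    rw [hn, mul_div_cancel_right₀ _ (by exact_mod_cast hL)]

theorem finite_setOf_norm_le_den_dvd (C : ℝ) {L : ℕ} (hL : L ≠ 0) :
    {x : ι → ℚ | ‖x‖ ≤ C ∧ ∀ i, (x i).den ∣ L}.Finite :=
  (Set.Finite.pi fun _ => finite_setOf_rat_norm_le_den_dvd C hL).subset fun x ⟨hx, hd⟩ =>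
    Set.mem_univ_pi.mpr fun i => ⟨(norm_le_pi_norm x i).trans hx, hd i⟩

theorem finite_setOf_norm_le_maxPrimePow_lt_le_kAdicVal {k : ℕ} (hk : k ≠ 0) (C : ℝ) (T : ℕ)
    (w : WithTop ℤ) :
    {x : ι → ℚ | ‖x‖ ≤ C ∧ maxPrimePow k x < T ∧ w ≤ kAdicVal k x}.Finite := by
  set N := negPartNat w
  have hL : k ^ N * T.factorial ^ T ≠ 0 := by positivity
  refine (finite_setOf_norm_le_den_dvd C hL).subset fun x ⟨hC, hM, hw⟩ =>
    ⟨hC, (forall_den_dvd_iff hL).mpr fun p hp => ?_⟩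
  rw [Nat.factorization_mul (by positivity) (by positivity), Nat.factorization_pow,
    Nat.factorization_pow]
  simp only [Finsupp.add_apply, Finsupp.smul_apply, smul_eq_mul]
  by_cases hpk : p ∣ k
  · refine le_trans ?_ (mul_factorization_le_vecVal (Nat.mem_primeFactors.mpr ⟨hp, hpk, hk⟩)
      ((neg_negPartNat_le w).trans hw))
    rw [WithTop.coe_le_coe]
    push_cast
    have : (0 : ℤ) ≤ T * T.factorial.factorization p := by positivity
    linarith
  · refine le_trans ?_ (neg_negPartNat_le (vecVal p x))
    rw [WithTop.coe_le_coe, neg_le_neg_iff, ← denExp]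
    rcases Nat.eq_zero_or_pos (denExp p x) with h0 | hpos
    · rw [h0]
      positivity
    have hpow := (pow_denExp_le_maxPrimePow hp hpk hpos).trans_lt hM
    have hpT : p ≤ T := (Nat.le_self_pow hpos.ne' p).trans hpow.le
    have heT : denExp p x < T := (Nat.lt_pow_self hp.one_lt).trans hpow
    have : 1 ≤ T.factorial.factorization p :=
      hp.factorization_pos_of_dvd (Nat.factorial_ne_zero T) (Nat.dvd_factorial hp.pos hpT)
    have : (T : ℤ) ≤ T * T.factorial.factorization p := by
      exact_mod_cast Nat.le_mul_of_pos_right T this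
    have : (0 : ℤ) ≤ N * k.factorization p := by positivity
    push_cast
    omega

noncomputable def colouring (k : ℕ) (c : ℕ → (ι → ℚ) → Fin 3) (x : ι → ℚ) :
    (ZMod 2 × ZMod 2) × Fin 3 × ZMod 2 :=
  (sizeColour k x, c (leadPrime k x) x, kAdicColour k x)

theorem finite_setOf_colouring_eq {k : ℕ} (hk : 2 ≤ k) {c : ℕ → (ι → ℚ) → Fin 3}
    (hc : ∀ r, r.Prime → IsLeadColouring k r (c r)) (u : ι → ℚ) :
    {x | colouring k c (u + x) = colouring k c (k • x)}.Finite := by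
  refine (finite_setOf_norm_le_maxPrimePow_lt_le_kAdicVal (ι := ι) (k := k) (by omega)
    (8 * ‖u‖) (k * denProd u) (kAdicVal k u)).subset fun x hx => ?_
  simp only [Set.mem_ofPred_eq, colouring, ← Nat.cast_smul_eq_nsmul ℚ k x, Prod.mk.injEq] at hx
  obtain ⟨h₁, h₂, h₃⟩ := hx
  refine ⟨?_, ?_, ?_⟩
  · by_contra! h
    exact sizeColour_add_ne_smul hk h h₁
  · by_contra! h
    exact leadColour_add_ne_smul hk hc h h₂
  · by_contra! h
    exact kAdicColour_add_ne_smul h h₃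

end DilationColouring

theorem stmt_4_general (k m : ℕ) (hk : 2 ≤ k) :
    ∃ γ : (Fin m → ℚ) → Fin 72,
      ∀ u : Fin m → ℚ, ∀ X : Set (Fin m → ℚ), X.Infinite →
        ∃ x ∈ X, γ (u + x) ≠ γ (k • x) := by
  obtain ⟨c, hc⟩ := DilationColouring.exists_isLeadColouring (ι := Fin m) hk
  have hcard : Fintype.card ((ZMod 2 × ZMod 2) × Fin 3 × ZMod 2) ≤ 72 := by simp
  let e := (Fintype.equivFin _).toEmbedding.trans (Fin.castLEEmb hcard)
  refine ⟨e ∘ DilationColouring.colouring k c, fun u X hX => ?_⟩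
  obtain ⟨x, hxX, hx⟩ := (hX.sdiff (DilationColouring.finite_setOf_colouring_eq hk hc u)).nonempty
  exact ⟨x, hxX, fun h => hx (e.injective h)⟩

theorem stmt_4 (k m : ℕ) (hk : 2 ≤ k) (hm : 1 ≤ m) :
    ∃ γ : (Fin m → ℚ) → Fin 72,
      ∀ u : Fin m → ℚ, ∀ X : Set (Fin m → ℚ), X.Infinite →
        ∃ x ∈ X, γ (u + x) ≠ γ (k • x) :=
  stmt_4_general k m hk
end

section
/- Let Z be a nonmeagre subset of ℝ with the property of Baire and let k ∈ ℕ, k ≥ 2. Then there is an uncountable set H ⊆ ℝ such that kH ⊆ Z. -/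
/-!
Write `Z = U ∆ M` with `U` open and `M` meagre; `U` is nonempty since `Z` is not meagre, so it
contains an interval `(a, b)`. By Zorn's lemma take `H ⊆ (a/k, b/k)` maximal with `kH ∩ M = ∅`;
then `kH ⊆ U \ M ⊆ Z`. If `H` were countable, every element of `k(H ∪ {x})` has the form
`s + m x` with `s ∈ (k - m)H`, so the `x` spoiling `H ∪ {x}` lie in `H` or in one of countably many
affine preimages of `M`. That is a meagre set, and by the Baire category theorem some `x` in the
interval avoids it, contradicting maximality.
-/

open Cardinal

/-- `kH`: sums of `k` elements of `H`, repetitions allowed. -/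
def kTimes (k : ℕ) (H : Set ℝ) : Set ℝ :=
  {y | ∃ f : Fin k → ℝ, (∀ i, f i ∈ H) ∧ y = ∑ i, f i}

lemma Set.Countable.isMeagre {X : Type*} [TopologicalSpace X] [T1Space X]
    [∀ x : X, (nhdsWithin x {x}ᶜ).NeBot] {s : Set X} (hs : s.Countable) : IsMeagre s := by
  rw [← Set.biUnion_of_singleton s]
  exact isMeagre_biUnion hs fun x _ =>
    residual_of_dense_open isOpen_compl_singleton (dense_compl_singleton x)

lemma IsMeagre.preimage_add_mul {M : Set ℝ} (hM : IsMeagre M) (s : ℝ) {m : ℝ} (hm : m ≠ 0) :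
    IsMeagre ((fun x => s + m * x) ⁻¹' M) :=
  let e := (Homeomorph.mulLeft₀ m hm).trans (Homeomorph.addLeft s)
  hM.preimage_of_isOpenMap e.continuous e.isOpenMap

lemma kTimes_zero (H : Set ℝ) : kTimes 0 H = {0} := by
  ext y
  simp [kTimes]

lemma kTimes_empty {k : ℕ} (hk : k ≠ 0) : kTimes k ∅ = ∅ := by
  obtain ⟨k, rfl⟩ := Nat.exists_eq_succ_of_ne_zero hk
  ext y
  simp [kTimes]

lemma kTimes_mono {k : ℕ} {H H' : Set ℝ} (h : H ⊆ H') : kTimes k H ⊆ kTimes k H' := by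
  rintro y ⟨f, hf, rfl⟩
  exact ⟨f, fun i => h (hf i), rfl⟩

lemma add_mem_kTimes_succ {k : ℕ} {H : Set ℝ} {a s : ℝ} (ha : a ∈ H) (hs : s ∈ kTimes k H) :
    a + s ∈ kTimes (k + 1) H := by
  obtain ⟨f, hf, rfl⟩ := hs
  exact ⟨Fin.cons a f, Fin.cases ha hf, by simp [Fin.sum_univ_succ]⟩

lemma Set.Countable.kTimes (k : ℕ) {H : Set ℝ} (hH : H.Countable) : (kTimes k H).Countable := by
  have := hH.to_subtype
  refine (Set.countable_range fun f : Fin k → H => ∑ i, (f i : ℝ)).mono ?_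
  rintro y ⟨f, hf, rfl⟩
  exact ⟨fun i => ⟨f i, hf i⟩, rfl⟩

lemma exists_eq_add_mul_of_mem_kTimes_insert {x : ℝ} {H : Set ℝ} :
    ∀ {k : ℕ} {y : ℝ}, y ∈ kTimes k (insert x H) →
      ∃ m ≤ k, ∃ s ∈ kTimes (k - m) H, y = s + m * x
  | 0, _, ⟨_, _, rfl⟩ => ⟨0, le_rfl, 0, by simp [kTimes_zero]⟩
  | k + 1, _, ⟨f, hf, rfl⟩ => by
    obtain ⟨m, hmk, s, hs, hsum⟩ :=
      exists_eq_add_mul_of_mem_kTimes_insert (k := k) ⟨Fin.tail f, fun i => hf i.succ, rfl⟩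
    rw [Fin.sum_univ_succ, show ∑ i : Fin k, f i.succ = s + m * x from hsum]
    rcases hf 0 with h0 | h0
    · exact ⟨m + 1, by omega, s, by simpa using hs, by rw [h0]; push_cast; ring⟩
    · refine ⟨m, by omega, f 0 + s, ?_, by ring⟩
      rw [Nat.sub_add_comm hmk]
      exact add_mem_kTimes_succ h0 hs

lemma kTimes_subset_Ioo {k : ℕ} (hk : k ≠ 0) {H : Set ℝ} {a b : ℝ}
    (hH : H ⊆ Set.Ioo (a / k) (b / k)) : kTimes k H ⊆ Set.Ioo a b := by
  rintro _ ⟨f, hf, rfl⟩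
  have hk' : (k : ℝ) ≠ 0 := Nat.cast_ne_zero.2 hk
  have hne : (Finset.univ : Finset (Fin k)).Nonempty :=
    Finset.univ_nonempty_iff.2 ⟨⟨0, Nat.pos_of_ne_zero hk⟩⟩
  constructor
  · simpa [mul_div_cancel₀ _ hk'] using
      Finset.sum_lt_sum_of_nonempty hne (f := fun _ => a / k) fun i _ => (hH (hf i)).1
  · simpa [mul_div_cancel₀ _ hk'] using
      Finset.sum_lt_sum_of_nonempty hne (g := fun _ => b / k) fun i _ => (hH (hf i)).2

lemma exists_mem_kTimes_of_mem_kTimes_sUnion {k : ℕ} {c : Set (Set ℝ)}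
    (hc : DirectedOn (· ⊆ ·) c) (hne : c.Nonempty) {y : ℝ} (hy : y ∈ kTimes k (⋃₀ c)) :
    ∃ t ∈ c, y ∈ kTimes k t := by
  obtain ⟨f, hf, rfl⟩ := hy
  obtain ⟨t, htc, ht⟩ := hc.exists_mem_subset_of_finite_of_subset_sUnion hne
    (Set.finite_range f) (Set.range_subset_iff.2 hf)
  exact ⟨t, htc, f, fun i => ht ⟨i, rfl⟩, rfl⟩

lemma exists_insert_disjoint_kTimes {k : ℕ} {H M V : Set ℝ} (hH : H.Countable)
    (hM : IsMeagre M) (hV : IsOpen V) (hVne : V.Nonempty) (hHM : Disjoint (kTimes k H) M) :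
    ∃ x ∈ V, x ∉ H ∧ Disjoint (kTimes k (insert x H)) M := by
  set bad := H ∪ ⋃ m : ℕ, ⋃ s ∈ kTimes (k - m) H, (fun x => s + m * x) ⁻¹' M
  have hbad : IsMeagre bad := by
    refine hH.isMeagre.union (isMeagre_iUnion fun m => isMeagre_biUnion (hH.kTimes _) ?_)
    intro s hs
    rcases eq_or_ne m 0 with rfl | hm
    · -- `s ∈ kH` lies outside `M`, so this preimage is empty
      simpa [Set.disjoint_left.1 hHM hs] using IsMeagre.empty
    · exact hM.preimage_add_mul s (Nat.cast_ne_zero.2 hm)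
  obtain ⟨x, hxV, hxbad⟩ : (V \ bad).Nonempty := by
    by_contra h
    exact not_isMeagre_of_isOpen hV hVne
      (hbad.mono (Set.sdiff_eq_empty.1 (Set.not_nonempty_iff_eq_empty.1 h)))
  simp only [bad, Set.mem_union, Set.mem_iUnion, not_or, not_exists] at hxbad
  refine ⟨x, hxV, hxbad.1, Set.disjoint_left.2 fun y hy hyM => ?_⟩
  obtain ⟨m, -, s, hs, rfl⟩ := exists_eq_add_mul_of_mem_kTimes_insert hy
  exact hxbad.2 m s hs hyM

lemma exists_uncountable_subset_disjoint_kTimes {k : ℕ} (hk : k ≠ 0) {M V : Set ℝ}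
    (hM : IsMeagre M) (hV : IsOpen V) (hVne : V.Nonempty) :
    ∃ H ⊆ V, ℵ₁ ≤ #H ∧ Disjoint (kTimes k H) M := by
  set S := {H : Set ℝ | H ⊆ V ∧ Disjoint (kTimes k H) M}
  have hchain : ∀ c ⊆ S, IsChain (· ⊆ ·) c → c.Nonempty → ∃ ub ∈ S, ∀ s ∈ c, s ⊆ ub := by
    refine fun c hcS hc hne => ⟨⋃₀ c, ⟨Set.sUnion_subset fun t ht => (hcS ht).1, ?_⟩,
      fun _ => Set.subset_sUnion_of_mem⟩
    refine Set.disjoint_left.2 fun y hy => ?_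
    obtain ⟨t, htc, hyt⟩ := exists_mem_kTimes_of_mem_kTimes_sUnion hc.directedOn hne hy
    exact Set.disjoint_left.1 (hcS htc).2 hyt
  have hempty : ∅ ∈ S := ⟨Set.empty_subset V, by simp [kTimes_empty hk]⟩
  obtain ⟨H, -, hmax⟩ := zorn_subset_nonempty S hchain ∅ hempty
  refine ⟨H, hmax.1.1, ?_, hmax.1.2⟩
  by_contra hcount
  rw [not_le, lt_aleph_one_iff, le_aleph0_iff_set_countable] at hcount
  obtain ⟨x, hxV, hxH, hdisj⟩ := exists_insert_disjoint_kTimes hcount hM hV hVne hmax.1.2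
  exact hxH (hmax.2 ⟨Set.insert_subset hxV hmax.1.1, hdisj⟩ (Set.subset_insert x H)
    (Set.mem_insert x H))

theorem stmt_14 (Z : Set ℝ) (hZnm : ¬ IsMeagre Z)
    (hZbaire : ∃ (U M : Set ℝ), IsOpen U ∧ IsMeagre M ∧ Z = symmDiff U M)
    (k : ℕ) (hk : 2 ≤ k) :
    ∃ H : Set ℝ, ℵ₁ ≤ #H ∧ kTimes k H ⊆ Z := by
  obtain ⟨U, M, hU, hM, rfl⟩ := hZbaire
  have hk0 : k ≠ 0 := by omega
  obtain ⟨u, hu⟩ : U.Nonempty := Set.nonempty_iff_ne_empty.2 fun hU0 =>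
    hZnm (by rwa [hU0, ← Set.bot_eq_empty, bot_symmDiff])
  obtain ⟨ε, hε, hball⟩ := Metric.isOpen_iff.1 hU u hu
  have hI : (Set.Ioo ((u - ε) / k) ((u + ε) / k)).Nonempty :=
    Set.nonempty_Ioo.2 (div_lt_div_of_pos_right (by linarith) (by positivity))
  obtain ⟨H, hHI, hH, hHM⟩ := exists_uncountable_subset_disjoint_kTimes hk0 hM isOpen_Ioo hI
  refine ⟨H, hH, fun y hy => Set.mem_symmDiff.2 (Or.inl ⟨?_, Set.disjoint_left.1 hHM hy⟩)⟩
  exact hball (Real.ball_eq_Ioo u ε ▸ kTimes_subset_Ioo hk0 hHI hy)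
end

section
/- Let k ≥ 2 and suppose ℝ is countably coloured so that each colour class has the property of Baire. Then there exists an uncountable set H ⊆ ℝ such that kH is monochromatic. -/
open Cardinal

open Set Filter

lemma kTimes_countable (j : ℕ) {H : Set ℝ} (hH : H.Countable) : (kTimes j H).Countable := by
  have hsub : kTimes j H ⊆ (fun f : Fin j → ℝ => ∑ i, f i) '' {f | ∀ i, f i ∈ H} := by
    rintro y ⟨f, hf, rfl⟩
    exact ⟨f, hf, rfl⟩
  have hpi : ({f : Fin j → ℝ | ∀ i, f i ∈ H}).Countable := by
    have := Set.countable_pi (π := fun _ : Fin j => ℝ) (s := fun _ => H) fun _ => hH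
    exact this
  exact (hpi.image _).mono hsub

lemma isMeagre_iUnion_countable {ι : Type*} [Countable ι] {s : ι → Set ℝ}
    (hs : ∀ i, IsMeagre (s i)) : IsMeagre (⋃ i, s i) := by
  rw [IsMeagre, Set.compl_iUnion]
  exact countable_iInter_mem.mpr hs

lemma isMeagre_singleton (x : ℝ) : IsMeagre ({x} : Set ℝ) :=
  residual_of_dense_open isOpen_compl_singleton (dense_compl_singleton x)

lemma isMeagre_of_countable {s : Set ℝ} (hs : s.Countable) : IsMeagre s := by
  have h : s = ⋃ x : s, ({(x : ℝ)} : Set ℝ) := by ext y; simp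
  have : Countable s := hs.to_subtype
  rw [h]
  exact isMeagre_iUnion_countable fun x => isMeagre_singleton _

lemma isMeagre_preimage_affine {m s : ℝ} (hm : m ≠ 0) {M : Set ℝ} (hM : IsMeagre M) :
    IsMeagre ((fun x : ℝ => m * x + s) ⁻¹' M) := by
  set e : ℝ ≃ₜ ℝ := affineHomeomorph m s hm with he
  have hpre : (fun x : ℝ => m * x + s) ⁻¹' M = e ⁻¹' M := rfl
  rw [hpre, IsMeagre, ← Set.preimage_compl]
  obtain ⟨S, hSo, hSd, hSc, hSsub⟩ := mem_residual_iff.mp hM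
  refine Filter.mem_of_superset ((countable_sInter_mem ((hSc.image (fun t => e ⁻¹' t)))).mpr ?_) ?_
  · rintro t ⟨u, hu, rfl⟩
    exact residual_of_dense_open ((hSo u hu).preimage e.continuous)
      ((hSd u hu).preimage e.isOpenMap)
  · rw [Set.sInter_image]
    intro x hx
    simp only [Set.mem_iInter] at hx
    exact hSsub (by exact fun u hu => hx u hu)

lemma sum_mem_Icc {n : ℕ} {a b : ℝ} (f : Fin n → ℝ) (h : ∀ i, f i ∈ Set.Ioo a b) :
    (n : ℝ) * a ≤ ∑ i, f i ∧ ∑ i, f i ≤ (n : ℝ) * b := by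
  constructor
  · calc (n : ℝ) * a = ∑ _i : Fin n, a := by
          rw [Finset.sum_const, Finset.card_univ, Fintype.card_fin, nsmul_eq_mul]
      _ ≤ ∑ i, f i := Finset.sum_le_sum fun i _ => (h i).1.le
  · calc ∑ i, f i ≤ ∑ _i : Fin n, b := Finset.sum_le_sum fun i _ => (h i).2.le
      _ = (n : ℝ) * b := by
          rw [Finset.sum_const, Finset.card_univ, Fintype.card_fin, nsmul_eq_mul]

/-- sums of members of `kTimes j H` with `H ⊆ Ioo a' b'` lie in `Icc (j*a') (j*b')`. -/
lemma kTimes_bound {j : ℕ} {a' b' : ℝ} {H : Set ℝ} (hH : H ⊆ Set.Ioo a' b')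
    {s : ℝ} (hs : s ∈ kTimes j H) : (j : ℝ) * a' ≤ s ∧ s ≤ (j : ℝ) * b' := by
  obtain ⟨f, hf, rfl⟩ := hs
  exact sum_mem_Icc f fun i => hH (hf i)

/-- Key extension lemma. -/
lemma extend_lemma {k : ℕ} (hk : 1 ≤ k) {C : Set ℝ} {a b : ℝ} (hab : a < b)
    (hmeag : IsMeagre (Set.Ioo a b \ C)) {H : Set ℝ} (hHc : H.Countable)
    (hHI : H ⊆ Set.Ioo (a / k) (b / k)) (hHC : kTimes k H ⊆ C) :
    ∃ x ∈ Set.Ioo (a / k) (b / k), x ∉ H ∧ kTimes k (insert x H) ⊆ C := by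
  classical
  have hk0 : (0 : ℝ) < k := by exact_mod_cast hk
  have hkne : (k : ℝ) ≠ 0 := ne_of_gt hk0
  -- the bad set
  let B : ∀ m : Fin k, (kTimes (k - (m.1 + 1)) H) → Set ℝ := fun m s =>
    (fun x : ℝ => ((m.1 + 1 : ℕ) : ℝ) * x + (s : ℝ)) ⁻¹' (Set.Ioo a b \ C)
  have hcnt : ∀ m : Fin k, Countable (kTimes (k - (m.1 + 1)) H) := fun m =>
    (kTimes_countable _ hHc).to_subtype
  let Bad : Set ℝ := H ∪ ⋃ p : Σ m : Fin k, (kTimes (k - (m.1 + 1)) H), B p.1 p.2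
  have hBmeag : ∀ (m : Fin k) (s : (kTimes (k - (m.1 + 1)) H)), IsMeagre (B m s) := by
    intro m s
    apply isMeagre_preimage_affine _ hmeag
    have : (0:ℝ) < ((m.1 + 1 : ℕ) : ℝ) := by positivity
    exact ne_of_gt this
  have hBad : IsMeagre Bad := by
    rw [IsMeagre, Set.compl_union]
    exact Filter.inter_mem (isMeagre_of_countable hHc)
      (isMeagre_iUnion_countable (fun p => hBmeag p.1 p.2))
  -- find a good point
  have hIopen : IsOpen (Set.Ioo (a / k) (b / k)) := isOpen_Ioo
  have hIne : (Set.Ioo (a / k) (b / k)).Nonempty := by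
    rw [Set.nonempty_Ioo]
    exact div_lt_div_of_pos_right hab hk0
  have hdense : Dense Badᶜ := dense_of_mem_residual hBad
  obtain ⟨x, hxI, hxB⟩ := hdense.inter_open_nonempty _ hIopen hIne
  have hxH : x ∉ H := fun h => hxB (Set.mem_union_left _ h)
  have hxgood : ∀ (m : Fin k) (s : ℝ), s ∈ kTimes (k - (m.1 + 1)) H →
      ((m.1 + 1 : ℕ) : ℝ) * x + s ∈ C := by
    intro m s hs
    have hnotB : x ∉ B m ⟨s, hs⟩ := fun h =>
      hxB (Set.mem_union_right _ (Set.mem_iUnion.mpr ⟨⟨m, ⟨s, hs⟩⟩, h⟩))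
    -- show the sum is in Ioo a b
    have hmle : m.1 + 1 ≤ k := m.2
    have hjcast : ((k - (m.1 + 1) : ℕ) : ℝ) = (k : ℝ) - ((m.1 + 1 : ℕ) : ℝ) := by
      exact Nat.cast_sub hmle
    obtain ⟨hs1, hs2⟩ := kTimes_bound hHI hs
    have hm1 : (0:ℝ) < ((m.1 + 1 : ℕ) : ℝ) := by positivity
    have hx1 : a / k < x := hxI.1
    have hx2 : x < b / k := hxI.2
    have hmem : ((m.1 + 1 : ℕ) : ℝ) * x + s ∈ Set.Ioo a b := by
      constructor
      · have h1 : ((m.1 + 1 : ℕ) : ℝ) * (a / k) < ((m.1 + 1 : ℕ) : ℝ) * x :=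
          mul_lt_mul_of_pos_left hx1 hm1
        have h2 : ((m.1 + 1 : ℕ) : ℝ) * (a / k) + ((k - (m.1 + 1) : ℕ) : ℝ) * (a / k)
            = a := by
          rw [hjcast]; field_simp; ring
        nlinarith [hs1]
      · have h1 : ((m.1 + 1 : ℕ) : ℝ) * x < ((m.1 + 1 : ℕ) : ℝ) * (b / k) :=
          mul_lt_mul_of_pos_left hx2 hm1
        have h2 : ((m.1 + 1 : ℕ) : ℝ) * (b / k) + ((k - (m.1 + 1) : ℕ) : ℝ) * (b / k)
            = b := by
          rw [hjcast]; field_simp; ring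
        nlinarith [hs2]
    by_contra hnC
    exact hnotB ⟨hmem, hnC⟩
  refine ⟨x, hxI, hxH, ?_⟩
  rintro y ⟨f, hf, rfl⟩
  set T : Finset (Fin k) := Finset.univ.filter (fun i => f i = x) with hT
  have hsplit : ∑ i, f i = (∑ i ∈ T, f i) + ∑ i ∈ Tᶜ, f i :=
    (Finset.sum_add_sum_compl T f).symm
  have hTsum : ∑ i ∈ T, f i = (T.card : ℝ) * x := by
    rw [Finset.sum_congr rfl (fun i hi => (Finset.mem_filter.mp hi).2),
      Finset.sum_const, nsmul_eq_mul]
  have hTcc : Tᶜ.card = k - T.card := by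
    rw [Finset.card_compl, Fintype.card_fin]
  have hcompl : (∑ i ∈ Tᶜ, f i) ∈ kTimes (k - T.card) H := by
    have hmemH : ∀ i : Fin k, i ∈ Tᶜ → f i ∈ H := by
      intro i hi
      have hne : f i ≠ x := by
        intro h
        exact (Finset.mem_compl.mp hi) (Finset.mem_filter.mpr ⟨Finset.mem_univ _, h⟩)
      rcases hf i with h | h
      · exact absurd h hne
      · exact h
    let q : Fin (k - T.card) ≃ {i // i ∈ Tᶜ} :=
      (finCongr hTcc.symm).trans Tᶜ.equivFin.symm
    refine ⟨fun j => f ((q j : Fin k)), ?_, ?_⟩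
    · intro j
      exact hmemH _ (q j).2
    · rw [← Finset.sum_coe_sort Tᶜ f]
      exact (Equiv.sum_comp q (fun i : {i // i ∈ Tᶜ} => f (i : Fin k))).symm
  rcases Nat.eq_zero_or_pos T.card with hm0 | hmpos
  · -- no copies of x
    have : Tᶜ = Finset.univ := by
      rw [Finset.card_eq_zero] at hm0
      rw [hm0, Finset.compl_empty]
    rw [hsplit, hTsum, hm0]
    simp only [Nat.cast_zero, zero_mul, zero_add]
    apply hHC
    rw [hm0] at hcompl
    simpa using hcompl
  · -- T.card = m ≥ 1
    have hmle : T.card ≤ k := by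
      simpa [Fintype.card_fin] using Finset.card_le_univ T
    have hmlt : T.card - 1 < k := by omega
    set m : Fin k := ⟨T.card - 1, hmlt⟩ with hm
    have hm1 : m.1 + 1 = T.card := by simp [hm]; omega
    have := hxgood m _ (by rw [hm1]; exact hcompl)
    rw [hm1] at this
    rw [hsplit, hTsum]
    exact this

theorem stmt_15 (k : ℕ) (hk : 2 ≤ k) (c : ℝ → ℕ)
    (hc : ∀ i : ℕ, ∃ (U M : Set ℝ), IsOpen U ∧ IsMeagre M ∧ c ⁻¹' {i} = symmDiff U M) :
    ∃ H : Set ℝ, ℵ₁ ≤ #H ∧ ∃ i : ℕ, ∀ y ∈ kTimes k H, c y = i := by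
  classical
  -- some colour class is non-meagre
  have hex : ∃ i, ¬ IsMeagre (c ⁻¹' {i}) := by
    by_contra h
    push_neg at h
    have huniv : (Set.univ : Set ℝ) = ⋃ i, c ⁻¹' {i} := by
      ext x; simp
    have hmu : IsMeagre (Set.univ : Set ℝ) := by
      rw [huniv]; exact isMeagre_iUnion_countable h
    have hd : Dense ((Set.univ : Set ℝ)ᶜ) := dense_of_mem_residual hmu
    rw [Set.compl_univ] at hd
    exact Set.not_nonempty_empty hd.nonempty
  obtain ⟨i, hi⟩ := hex
  obtain ⟨U, M, hU, hM, heq⟩ := hc i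
  -- U is nonempty
  have hUne : U.Nonempty := by
    by_contra hUe
    rw [Set.not_nonempty_iff_eq_empty] at hUe
    apply hi
    rw [heq, hUe]
    exact hM.mono (by rw [Set.symmDiff_def]; simp)
  obtain ⟨u, hu⟩ := hUne
  obtain ⟨δ, hδ, hball⟩ := Metric.isOpen_iff.mp hU u hu
  rw [Real.ball_eq_Ioo] at hball
  set a := u - δ with ha
  set b := u + δ with hb
  have hab : a < b := by simp [ha, hb]; linarith
  set C := c ⁻¹' {i} with hC
  have hmeag : IsMeagre (Set.Ioo a b \ C) := by
    apply hM.mono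
    intro z ⟨hz1, hz2⟩
    have hzU : z ∈ U := hball hz1
    rw [heq] at hz2
    rw [Set.symmDiff_def] at hz2
    simp only [Set.mem_union, Set.mem_diff, not_or, not_and, not_not] at hz2
    exact hz2.1 hzU
  have hk1 : 1 ≤ k := le_trans (by norm_num) hk
  -- Zorn's lemma
  set S : Set (Set ℝ) := {H | H ⊆ Set.Ioo (a / k) (b / k) ∧ kTimes k H ⊆ C} with hS
  have hem : (∅ : Set ℝ) ∈ S := by
    constructor
    · exact Set.empty_subset _
    · rintro y ⟨f, hf, rfl⟩
      exact absurd (hf ⟨0, by omega⟩) (Set.notMem_empty _)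
  have hchain : ∀ c' ⊆ S, IsChain (· ⊆ ·) c' → c'.Nonempty →
      ∃ ub ∈ S, ∀ s ∈ c', s ⊆ ub := by
    intro c' hc'S hch hne
    refine ⟨⋃₀ c', ⟨?_, ?_⟩, fun s hs => Set.subset_sUnion_of_mem hs⟩
    · exact Set.sUnion_subset fun s hs => (hc'S hs).1
    · rintro y ⟨f, hf, rfl⟩
      have hmem : ∀ i, ∃ t ∈ c', f i ∈ t := fun i => Set.mem_sUnion.mp (hf i)
      choose t ht hft using hmem
      have : Nonempty c' := hne.to_subtype
      have hdir : Directed (· ⊆ ·) (Subtype.val : c' → Set ℝ) :=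
        hch.directedOn.directed_val
      obtain ⟨z, hz⟩ := hdir.finite_le (fun i => (⟨t i, ht i⟩ : c'))
      refine (hc'S z.2).2 ⟨f, fun i => hz i (hft i), rfl⟩
  obtain ⟨Hm, -, hmax⟩ := zorn_subset_nonempty S hchain ∅ hem
  have hHmS : Hm ∈ S := hmax.prop
  -- Hm is uncountable
  have hunc : ¬ Hm.Countable := by
    intro hcnt
    obtain ⟨x, hxI, hxH, hxC⟩ := extend_lemma hk1 hab hmeag hcnt hHmS.1 hHmS.2
    have hins : insert x Hm ∈ S :=
      ⟨Set.insert_subset hxI hHmS.1, hxC⟩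
    have := hmax.le_of_ge hins (Set.subset_insert x Hm)
    exact hxH (this (Set.mem_insert x Hm))
  refine ⟨Hm, ?_, i, fun y hy => hHmS.2 hy⟩
  rw [countable_iff_lt_aleph_one] at hunc
  exact not_lt.mp hunc
end

section
/- Let A = {0,...,m−1}^ℕ with the uniform product measure μ and coordinatewise addition mod m, and let P ⊆ A be measurable with μ(P) > 0. Then there exist T ⊆ P with μ(T) > 0 and an infinite set Y ⊆ ℕ such that for every α ∈ T and every β ∈ A, if β(n) = α(n) for all n ∈ ℕ \ Y, then β ∈ P. -/
/-!
Choose an open `U ⊇ Pᶜ` with `μ U < μ Pᶜ + μ P / 2` (outer regularity). Since `U` is open, the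
part of its translate by `Pi.single y c` lying outside `U` has measure tending to `0` as `y`
leaves every finite set; so one can pick new coordinates `y₀, y₁, …` one at a time such that the
set of points that some change of finitely many of the `yᵢ` moves into `U` has measure at most
`μ U + μ P / 2 < μ univ`. Its complement `T` works: if `β` agrees with `α ∈ T` off `Y` and
`β ∈ U`, then by openness of `U` a change of `α` on finitely many coordinates of `Y` already
lands in `U`.
-/

open MeasureTheory ENNReal

instance (m : ℕ) : MeasurableSpace (ZMod m) := ⊤

open Filter Topology Set

section FiniteChange

variable {ι G : Type*}

def finChangeSat (Y : Set ι) (V : Set (ι → G)) : Set (ι → G) :=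
  {α | ∃ F : Finset ι, ↑F ⊆ Y ∧ ∃ β ∈ V, EqOn β α (↑F)ᶜ}

lemma subset_finChangeSat (Y : Set ι) (V : Set (ι → G)) : V ⊆ finChangeSat Y V :=
  fun α hα => ⟨∅, by simp, α, hα, eqOn_refl α _⟩

@[simp]
lemma finChangeSat_empty (V : Set (ι → G)) : finChangeSat ∅ V = V := by
  refine Subset.antisymm ?_ (subset_finChangeSat ∅ V)
  rintro α ⟨F, hF, β, hβ, hβα⟩
  rw [subset_empty_iff, Finset.coe_eq_empty] at hF
  convert hβ
  exact funext fun n => (hβα (by simp [hF])).symm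

lemma finChangeSat_mono {Y Y' : Set ι} (h : Y ⊆ Y') (V : Set (ι → G)) :
    finChangeSat Y V ⊆ finChangeSat Y' V :=
  fun _ ⟨F, hF, hβ⟩ => ⟨F, hF.trans h, hβ⟩

lemma finChangeSat_insert_subset [DecidableEq ι] (y : ι) (Y : Set ι) (V : Set (ι → G)) :
    finChangeSat (insert y Y) V ⊆ finChangeSat {y} (finChangeSat Y V) := by
  rintro α ⟨F, hFY, β, hβ, hβα⟩
  refine ⟨{y}, by simp, Function.update α y (β y), ⟨F.erase y, ?_, β, hβ, fun n hn => ?_⟩,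
    fun n hn => Function.update_of_ne (by simpa using hn) _ _⟩
  · intro n hn
    rw [Finset.coe_erase, Set.mem_sdiff, mem_singleton_iff] at hn
    exact (hFY hn.1).resolve_left hn.2
  · rcases eq_or_ne n y with rfl | hny
    · simp
    · rw [Function.update_of_ne hny]
      exact hβα fun hnF => hn (Finset.mem_erase.2 ⟨hny, hnF⟩)

lemma finChangeSat_iUnion_subset {κ : Type*} [Nonempty κ] {Y : κ → Set ι}
    (hY : Directed (· ⊆ ·) Y) (V : Set (ι → G)) :
    finChangeSat (⋃ k, Y k) V ⊆ ⋃ k, finChangeSat (Y k) V := by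
  rintro α ⟨F, hF, hβ⟩
  obtain ⟨k, hk⟩ := hY.exists_mem_subset_of_finset_subset_biUnion hF
  exact mem_iUnion.2 ⟨k, F, hk, hβ⟩

lemma finChangeSat_singleton_subset [DecidableEq ι] [AddGroup G] (y : ι) (V : Set (ι → G)) :
    finChangeSat {y} V ⊆ V ∪ ⋃ c : G, (· + Pi.single y c) ⁻¹' V \ V := by
  rintro α ⟨F, hF, β, hβ, hβα⟩
  by_cases hα : α ∈ V
  · exact Or.inl hα
  refine Or.inr (mem_iUnion.2 ⟨-α y + β y, ?_, hα⟩)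
  show α + Pi.single y (-α y + β y) ∈ V
  convert hβ using 1
  funext n
  rcases eq_or_ne n y with rfl | hny
  · simp
  · rw [Pi.add_apply, Pi.single_eq_of_ne hny, add_zero]
    exact (hβα fun hnF => hny (by simpa using hF hnF)).symm

variable [TopologicalSpace G]

lemma IsOpen.exists_finset_eqOn_subset {V : Set (ι → G)} (hV : IsOpen V) {β : ι → G}
    (hβ : β ∈ V) : ∃ I : Finset ι, ∀ γ, EqOn γ β I → γ ∈ V := by
  obtain ⟨I, u, hu, hsub⟩ := isOpen_pi_iff.1 hV β hβ
  exact ⟨I, fun γ hγ => hsub fun n hn => hγ hn ▸ (hu n hn).2⟩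

lemma IsOpen.mem_finChangeSat_of_eqOn {V : Set (ι → G)} (hV : IsOpen V) {Y : Set ι}
    {α β : ι → G} (hβ : β ∈ V) (hβα : EqOn β α Yᶜ) : α ∈ finChangeSat Y V := by
  classical
  obtain ⟨I, hI⟩ := hV.exists_finset_eqOn_subset hβ
  refine ⟨I.filter (· ∈ Y), fun n hn => (Finset.mem_filter.1 hn).2,
    fun n => if n ∈ I then β n else α n, hI _ fun n hn => if_pos hn, fun n hn => ?_⟩
  by_cases hnI : n ∈ I
  · exact (if_pos hnI).trans (hβα fun hnY => hn (Finset.mem_filter.2 ⟨hnI, hnY⟩))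
  · exact if_neg hnI

lemma IsOpen.finChangeSat [DiscreteTopology G] {V : Set (ι → G)} (hV : IsOpen V)
    (Y : Set ι) : IsOpen (finChangeSat Y V) := by
  classical
  refine isOpen_iff_forall_mem_open.2 fun α ⟨F, hFY, β, hβ, hβα⟩ => ?_
  obtain ⟨I, hI⟩ := hV.exists_finset_eqOn_subset hβ
  refine ⟨(I : Set ι).pi fun n => {α n}, fun α' hα' => ?_,
    isOpen_set_pi I.finite_toSet fun _ _ => isOpen_discrete _, fun n _ => rfl⟩
  refine ⟨F, hFY, fun n => if n ∈ F then β n else α' n, hI _ fun n hnI => ?_,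
    fun n hn => if_neg hn⟩
  by_cases hnF : n ∈ F
  · exact if_pos hnF
  · rw [if_neg hnF, hα' n hnI, hβα hnF]

end FiniteChange

section Translation

variable {κ X : Type*} [TopologicalSpace X] [MeasurableSpace X] [OpensMeasurableSpace X]
  (μ : Measure X) [IsFiniteMeasure μ] {V : Set X} {l : Filter κ} [l.IsCountablyGenerated]
  {g : κ → X}

lemma tendsto_measure_diff_preimage_add [AddZeroClass X] [ContinuousAdd X] (hV : IsOpen V)
    (hg : Tendsto g l (𝓝 0)) : Tendsto (fun k => μ (V \ (· + g k) ⁻¹' V)) l (𝓝 0) := by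
  have hlim : ∀ x, ∀ᶠ k in l, x ∈ V \ (· + g k) ⁻¹' V ↔ x ∈ (∅ : Set X) := by
    intro x
    by_cases hx : x ∈ V
    · have hx' : Tendsto (fun k => x + g k) l (𝓝 x) := by
        simpa using tendsto_const_nhds.add hg
      filter_upwards [hx'.eventually (hV.mem_nhds hx)] with k hk
      exact iff_of_false (fun h => h.2 hk) id
    · exact Eventually.of_forall fun k => by simp [hx]
  simpa using tendsto_measure_of_tendsto_indicator_of_isFiniteMeasure l μ
    (fun k => hV.measurableSet.diff (hV.preimage (continuous_add_const (g k))).measurableSet)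
    hlim

lemma tendsto_measure_preimage_add_diff [AddGroup X] [IsTopologicalAddGroup X] [MeasurableAdd X]
    [μ.IsAddRightInvariant] (hV : IsOpen V) (hg : Tendsto g l (𝓝 0)) :
    Tendsto (fun k => μ ((· + g k) ⁻¹' V \ V)) l (𝓝 0) := by
  have htranslate : ∀ k, μ ((· + g k) ⁻¹' V \ V) = μ (V \ (· + -g k) ⁻¹' V) := by
    intro k
    rw [← measure_preimage_add_right μ (g k) (V \ _)]
    congr 1
    ext x
    simp
  simpa only [htranslate] using
    tendsto_measure_diff_preimage_add μ hV (by simpa using hg.neg)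

end Translation

instance Filter.isCountablyGenerated_cofinite {ι : Type*} [Countable ι] :
    (cofinite : Filter ι).IsCountablyGenerated := by
  obtain ⟨f, hf⟩ := exists_injective_nat ι
  rw [← hf.comap_cofinite_eq, Nat.cofinite_eq_atTop]
  infer_instance

lemma tendsto_pi_single_cofinite {ι G : Type*} [DecidableEq ι] [Zero G] [TopologicalSpace G]
    (c : G) : Tendsto (fun i : ι => Pi.single i c) cofinite (𝓝 0) :=
  tendsto_pi_nhds.2 fun n => tendsto_const_nhds.congr'
    ((eventually_cofinite_ne n).mono fun _ hi => by simp [Pi.single_eq_of_ne' hi])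

section Saturation

variable {ι G : Type*} [Countable ι] [AddGroup G] [Fintype G] [TopologicalSpace G]
  [DiscreteTopology G] [MeasurableSpace G] [BorelSpace G]
  (μ : Measure (ι → G)) [IsFiniteMeasure μ] [μ.IsAddRightInvariant]

lemma eventually_measure_finChangeSat_singleton_le [DecidableEq ι] {V : Set (ι → G)}
    (hV : IsOpen V) {δ : ℝ≥0∞} (hδ : δ ≠ 0) :
    ∀ᶠ y in cofinite, μ (finChangeSat {y} V) ≤ μ V + δ := by
  have hsmall : Tendsto (fun y => ∑ c : G, μ ((· + Pi.single y c) ⁻¹' V \ V)) cofinite (𝓝 0) := by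
    simpa using tendsto_finsetSum Finset.univ fun c _ =>
      tendsto_measure_preimage_add_diff μ hV (tendsto_pi_single_cofinite c)
  filter_upwards [(tendsto_order.1 hsmall).2 δ hδ.bot_lt] with y hy
  calc μ (finChangeSat {y} V)
      ≤ μ (V ∪ ⋃ c : G, (· + Pi.single y c) ⁻¹' V \ V) := by
        apply measure_mono (finChangeSat_singleton_subset y V)
    _ ≤ μ V + μ (⋃ c : G, (· + Pi.single y c) ⁻¹' V \ V) := by apply measure_union_le
    _ ≤ μ V + ∑ c : G, μ ((· + Pi.single y c) ⁻¹' V \ V) := by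
        gcongr
        exact measure_iUnion_fintype_le μ _
    _ ≤ μ V + δ := by gcongr

lemma exists_finset_seq_measure_finChangeSat_le [Infinite ι] {V : Set (ι → G)} (hV : IsOpen V)
    {ε : ℕ → ℝ≥0∞} (hε : ∀ k, ε k ≠ 0) :
    ∃ F : ℕ → Finset ι, Monotone (fun k => (F k : Set ι)) ∧ (∀ k, (F k).card = k) ∧
      ∀ k, μ (finChangeSat (F k : Set ι) V) ≤ μ V + ∑ i ∈ Finset.range k, ε i := by
  classical
  have hstep : ∀ (k : ℕ) (F : Finset ι),
      ∃ y ∉ F, μ (finChangeSat (insert y ↑F) V) ≤ μ (finChangeSat ↑F V) + ε k := by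
    intro k F
    obtain ⟨y, hy, hyF⟩ := ((eventually_measure_finChangeSat_singleton_le μ
      (hV.finChangeSat F) (hε k)).and F.finite_toSet.eventually_cofinite_notMem).exists
    exact ⟨y, hyF, (measure_mono (finChangeSat_insert_subset y _ V)).trans hy⟩
  choose next hnext_notMem hnext_le using hstep
  obtain ⟨F, hF_zero, hF_succ⟩ : ∃ F : ℕ → Finset ι,
      F 0 = ∅ ∧ ∀ k, F (k + 1) = insert (next k (F k)) (F k) :=
    ⟨fun k => Nat.rec ∅ (fun k F => insert (next k F) F) k, rfl, fun _ => rfl⟩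
  refine ⟨F, monotone_nat_of_le_succ fun k => by simp [hF_succ, subset_insert],
    fun k => ?_, fun k => ?_⟩
  · induction k with
    | zero => rw [hF_zero, Finset.card_empty]
    | succ k ih => rw [hF_succ, Finset.card_insert_of_notMem (hnext_notMem k _), ih]
  · induction k with
    | zero => simp [hF_zero]
    | succ k ih =>
      calc μ (finChangeSat (F (k + 1) : Set ι) V) ≤ μ (finChangeSat (F k : Set ι) V) + ε k := by
            rw [hF_succ, Finset.coe_insert]; exact hnext_le k _
        _ ≤ μ V + ∑ i ∈ Finset.range (k + 1), ε i := by
            rw [Finset.sum_range_succ, ← add_assoc]; gcongr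

lemma exists_infinite_measure_finChangeSat_le [Infinite ι] {V : Set (ι → G)} (hV : IsOpen V)
    {ε : ℝ≥0∞} (hε : ε ≠ 0) : ∃ Y : Set ι, Y.Infinite ∧ μ (finChangeSat Y V) ≤ μ V + ε := by
  obtain ⟨ε', hε'_pos, hε'_sum⟩ := ENNReal.exists_pos_sum_of_countable hε ℕ
  obtain ⟨F, hF_mono, hF_card, hF_le⟩ := exists_finset_seq_measure_finChangeSat_le μ hV
    fun k => ENNReal.coe_ne_zero.2 (hε'_pos k).ne'
  refine ⟨⋃ k, (F k : Set ι), fun hfin => ?_, ?_⟩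
  · have := Finset.card_le_card
      (hfin.subset_toFinset.2 (subset_iUnion (fun k => (F k : Set ι)) (hfin.toFinset.card + 1)))
    rw [hF_card] at this
    omega
  calc μ (finChangeSat (⋃ k, (F k : Set ι)) V)
      ≤ μ (⋃ k, finChangeSat (F k : Set ι) V) :=
        measure_mono (finChangeSat_iUnion_subset hF_mono.directed_le V)
    _ = ⨆ k, μ (finChangeSat (F k : Set ι) V) :=
        Monotone.measure_iUnion fun _ _ hkl => finChangeSat_mono (hF_mono hkl) V
    _ ≤ μ V + ∑' i, (ε' i : ℝ≥0∞) :=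
        iSup_le fun k => (hF_le k).trans (by gcongr; exact ENNReal.sum_le_tsum _)
    _ ≤ μ V + ε := by gcongr

theorem exists_measure_pos_forall_eqOn_compl_mem [Infinite ι] {P : Set (ι → G)}
    (hP : NullMeasurableSet P μ) (hPpos : 0 < μ P) :
    ∃ (T : Set (ι → G)) (Y : Set ι), T ⊆ P ∧ Y.Infinite ∧ 0 < μ T ∧
      ∀ α ∈ T, ∀ β, EqOn β α Yᶜ → β ∈ P := by
  have ha : μ P / 2 ≠ 0 := by simpa using hPpos.ne'
  obtain ⟨U, hPU, hU, hUμ⟩ := Pᶜ.exists_isOpen_lt_of_lt (μ Pᶜ + μ P / 2)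
    (ENNReal.lt_add_right (measure_ne_top μ _) ha)
  obtain ⟨Y, hY, hYμ⟩ := exists_infinite_measure_finChangeSat_le μ hU ha
  have hsat : μ (finChangeSat Y U) < μ univ :=
    calc μ (finChangeSat Y U) ≤ μ U + μ P / 2 := hYμ
      _ < μ Pᶜ + μ P / 2 + μ P / 2 := ENNReal.add_lt_add_right (by finiteness) hUμ
      _ = μ univ := by rw [add_assoc, ENNReal.add_halves, add_comm, measure_add_measure_compl₀ hP]
  refine ⟨(finChangeSat Y U)ᶜ, Y, compl_subset_comm.1 (hPU.trans (subset_finChangeSat Y U)), hY,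
    ?_, fun α hα β hβα => ?_⟩
  · rw [measure_compl (hU.finChangeSat Y).measurableSet (measure_ne_top μ _)]
    exact tsub_pos_of_lt hsat
  · by_contra hβ
    exact hα (hU.mem_finChangeSat_of_eqOn (hPU hβ) hβα)

end Saturation

section PointCylinders

variable {ι G : Type*}

def pointCylinders (ι G : Type*) : Set (Set (ι → G)) :=
  {S | ∃ (F : Finset ι) (d : ι → G), S = {α | ∀ n ∈ F, α n = d n}}

lemma isPiSystem_pointCylinders : IsPiSystem (pointCylinders ι G) := by
  classical
  rintro _ ⟨F₁, d₁, rfl⟩ _ ⟨F₂, d₂, rfl⟩ ⟨γ, hγ₁, hγ₂⟩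
  refine ⟨F₁ ∪ F₂, γ, ?_⟩
  ext α
  simp only [mem_inter_iff, mem_ofPred_eq, Finset.mem_union]
  constructor
  · rintro ⟨h₁, h₂⟩ n (hn | hn)
    · rw [h₁ n hn, hγ₁ n hn]
    · rw [h₂ n hn, hγ₂ n hn]
  · intro h
    exact ⟨fun n hn => (h n (.inl hn)).trans (hγ₁ n hn),
      fun n hn => (h n (.inr hn)).trans (hγ₂ n hn)⟩

variable [MeasurableSpace G] [MeasurableSingletonClass G]

lemma measurableSet_setOf_forall_mem_eq (F : Finset ι) (d : ι → G) :
    MeasurableSet {α : ι → G | ∀ n ∈ F, α n = d n} := by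
  simp only [ofPred_forall]
  exact Finset.measurableSet_biInter F fun n _ => measurable_pi_apply n (measurableSet_singleton _)

lemma pi_eq_generateFrom_pointCylinders [Countable ι] [Countable G] :
    MeasurableSpace.pi = MeasurableSpace.generateFrom (pointCylinders ι G) := by
  refine le_antisymm (iSup_le fun n => MeasurableSpace.comap_le_iff_le_map.2 fun s _ => ?_)
    (MeasurableSpace.generateFrom_le ?_)
  · have : (fun α : ι → G => α n) ⁻¹' s = ⋃ c ∈ s, {α | ∀ k ∈ ({n} : Finset ι), α k = c} := by
      ext α; simp
    rw [MeasurableSpace.map_def, this]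
    exact MeasurableSet.biUnion s.to_countable fun c _ =>
      MeasurableSpace.measurableSet_generateFrom ⟨{n}, fun _ => c, rfl⟩
  · rintro _ ⟨F, d, rfl⟩
    exact measurableSet_setOf_forall_mem_eq F d

lemma isAddRightInvariant_of_measure_setOf_forall_mem_eq [Countable ι] [Countable G] [AddGroup G]
    [MeasurableAdd G] (μ : Measure (ι → G)) [IsFiniteMeasure μ] (c : Finset ι → ℝ≥0∞)
    (hμ : ∀ F (d : ι → G), μ {α | ∀ n ∈ F, α n = d n} = c F) : μ.IsAddRightInvariant := by
  refine ⟨fun g => ext_of_generate_finite _ pi_eq_generateFrom_pointCylinders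
    isPiSystem_pointCylinders ?_ (by simp [Measure.map_apply (measurable_add_const g)])⟩
  rintro _ ⟨F, d, rfl⟩
  rw [Measure.map_apply (measurable_add_const g) (measurableSet_setOf_forall_mem_eq F d)]
  have : (· + g) ⁻¹' {α | ∀ n ∈ F, α n = d n} = {α | ∀ n ∈ F, α n = (d - g) n} := by
    ext α
    simp [eq_sub_iff_add_eq]
  rw [this, hμ, hμ]

end PointCylinders

theorem stmt_17 (m : ℕ) (hm : 2 ≤ m) (μ : Measure (ℕ → ZMod m))
    -- `μ` is the product measure giving each digit uniform measure `1/m`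
    (hμ : ∀ (F : Finset ℕ) (d : ℕ → ZMod m),
      μ {α | ∀ n ∈ F, α n = d n} = (1 / (m : ℝ≥0∞)) ^ F.card)
    (P : Set (ℕ → ZMod m)) (hP : NullMeasurableSet P μ) (hPpos : 0 < μ P) :
    ∃ (T : Set (ℕ → ZMod m)) (Y : Set ℕ), T ⊆ P ∧ Y.Infinite ∧ 0 < μ T ∧
      ∀ α ∈ T, ∀ β : ℕ → ZMod m, (∀ n ∉ Y, β n = α n) → β ∈ P := by
  have : NeZero m := ⟨by omega⟩
  have : BorelSpace (ZMod m) := ⟨borel_eq_top_of_discrete.symm⟩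
  have : IsProbabilityMeasure μ := ⟨by simpa using hμ ∅ 0⟩
  have := isAddRightInvariant_of_measure_setOf_forall_mem_eq μ _ hμ
  exact exists_measure_pos_forall_eqOn_compl_mem μ hP hPpos
end

section
/- Let k ≥ 2 and Z ⊆ (0,1) be such that either Z is nonmeagre with the property of Baire, or Z is Lebesgue measurable with λ(Z) > 0. Then there exists H ⊆ ℝ with |H| = 2^{ℵ₀} such that kH ⊆ Z. -/
open Cardinal MeasureTheory

open Set Metric Filter Topology
open scoped ENNReal symmDiff

/-!
It suffices to find `c` and scales `δ₀, δ₁, …` with `δₙ₊₁ ≤ δₙ / 3` such that `Z` contains every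
`c + ∑ sₙ δₙ` with digits `k ≤ sₙ ≤ 2k`: then `H = {c / k + ∑ εₙ δₙ : εₙ ∈ {1, 2}}` satisfies
`kH ⊆ Z`, and since every tail `∑_{i > n} δᵢ` is at most `δₙ / 2`, distinct digit sequences give
distinct points of `H`.

The scales are chosen one at a time. At stage `n` the finitely many partial sums `p` are already
fixed, and one needs `x ∈ (0, δₙ₋₁ / 3)` such that all `p + m x`, `k ≤ m ≤ 2k`, stay in a large set.
In the measure case that set is the set `A` of Lebesgue density points of a closed `K ⊆ Z` of
positive measure: `0` is a density point of every `{x | p + m x ∈ A}`, hence of their intersection,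
so admissible `x` exist, and the limits lie in `closure A ⊆ Z`. In the Baire case `Z ⊇ U ∩ ⋂ Oⱼ`
with `U` open and `Oⱼ` open dense; at stage `n` the admissible `x` contain a dense open set near `0`
(the preimages of `Oₙ`), and choosing `x` so small that a ball of radius `3 k x` around each `p`
stays inside the current open set keeps the limits inside it.
-/

structure IsThirdDecreasing (δ : ℕ → ℝ) : Prop where
  pos : ∀ n, 0 < δ n
  succ_le : ∀ n, δ (n + 1) ≤ δ n / 3

namespace IsThirdDecreasing

variable {δ : ℕ → ℝ}

theorem le_geometric (hδ : IsThirdDecreasing δ) (n : ℕ) :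
    ∀ i, δ (i + n) ≤ (3 : ℝ)⁻¹ ^ i * δ n
  | 0 => by simp
  | i + 1 => by
    rw [Nat.add_right_comm, pow_succ]
    calc δ (i + n + 1) ≤ δ (i + n) / 3 := hδ.succ_le _
      _ ≤ (3 : ℝ)⁻¹ ^ i * δ n / 3 := by gcongr; exact hδ.le_geometric n i
      _ = _ := by ring

theorem summable_nat_add (hδ : IsThirdDecreasing δ) (n : ℕ) : Summable fun i => δ (i + n) :=
  Summable.of_nonneg_of_le (fun i => (hδ.pos _).le) (hδ.le_geometric n)
    ((summable_geometric_of_lt_one (by norm_num) (by norm_num)).mul_right (δ n))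

theorem tsum_nat_add_le (hδ : IsThirdDecreasing δ) (n : ℕ) :
    ∑' i, δ (i + n) ≤ 3 / 2 * δ n :=
  calc ∑' i, δ (i + n) ≤ ∑' i, (3 : ℝ)⁻¹ ^ i * δ n :=
        (hδ.summable_nat_add n).tsum_le_tsum (hδ.le_geometric n)
          ((summable_geometric_of_lt_one (by norm_num) (by norm_num)).mul_right (δ n))
    _ = 3 / 2 * δ n := by
        rw [tsum_mul_right, tsum_geometric_of_lt_one (by norm_num) (by norm_num)]
        norm_num

theorem norm_mul_le (hδ : IsThirdDecreasing δ) {w : ℕ → ℝ} {B : ℝ} (hw : ∀ i, |w i| ≤ B)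
    (i : ℕ) : ‖w i * δ i‖ ≤ B * δ i := by
  rw [Real.norm_eq_abs, abs_mul, abs_of_pos (hδ.pos i)]
  exact mul_le_mul_of_nonneg_right (hw i) (hδ.pos i).le

theorem summable_mul (hδ : IsThirdDecreasing δ) {w : ℕ → ℝ} {B : ℝ} (hw : ∀ i, |w i| ≤ B) :
    Summable fun i => w i * δ i :=
  Summable.of_norm_bounded ((by simpa using hδ.summable_nat_add 0 : Summable δ).mul_left B)
    (hδ.norm_mul_le hw)

theorem abs_tsum_mul_nat_add_le (hδ : IsThirdDecreasing δ) {w : ℕ → ℝ} {B : ℝ}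
    (hw : ∀ i, |w i| ≤ B) (n : ℕ) :
    |∑' i, w (i + n) * δ (i + n)| ≤ 3 / 2 * B * δ n := by
  have hB : 0 ≤ B := (abs_nonneg _).trans (hw 0)
  calc |∑' i, w (i + n) * δ (i + n)| ≤ B * ∑' i, δ (i + n) :=
        tsum_of_norm_bounded ((hδ.summable_nat_add n).hasSum.mul_left B)
          fun i => hδ.norm_mul_le hw (i + n)
    _ ≤ B * (3 / 2 * δ n) := by gcongr; exact hδ.tsum_nat_add_le n
    _ = 3 / 2 * B * δ n := by ring

theorem dist_tsum_sum_range_le (hδ : IsThirdDecreasing δ) {w : ℕ → ℝ} {B : ℝ}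
    (hw : ∀ i, |w i| ≤ B) (n : ℕ) :
    dist (∑' i, w i * δ i) (∑ i ∈ Finset.range n, w i * δ i) ≤ 3 / 2 * B * δ n := by
  rw [Real.dist_eq, ← (hδ.summable_mul hw).sum_add_tsum_nat_add n, add_sub_cancel_left]
  exact hδ.abs_tsum_mul_nat_add_le hw n

theorem injective_tsum_mul (hδ : IsThirdDecreasing δ) {d : Bool → ℝ} (hd : d false ≠ d true) :
    Function.Injective fun a : ℕ → Bool => ∑' n, d (a n) * δ n := by
  intro a b hab
  by_contra hne
  have hex : ∃ n, a n ≠ b n := Function.ne_iff.1 hne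
  set n := Nat.find hex
  set D := |d true - d false|
  have hD : 0 < D := abs_pos.2 (sub_ne_zero.2 hd.symm)
  have hdigit : ∀ x y : Bool, |d x - d y| ≤ D ∧ (x ≠ y → |d x - d y| = D) := by
    intro x y; cases x <;> cases y <;> simp [D, abs_sub_comm]
  set w : ℕ → ℝ := fun i => d (a i) - d (b i)
  have hw : ∀ i, |w i| ≤ D := fun i => (hdigit _ _).1
  have hprefix : ∑ i ∈ Finset.range (n + 1), w i * δ i = w n * δ n := by
    rw [Finset.sum_range_succ, Finset.sum_eq_zero fun i hi => ?_, zero_add]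
    simp [w, not_not.1 (Nat.find_min hex (Finset.mem_range.1 hi))]
  have hzero : w n * δ n + ∑' i, w (i + (n + 1)) * δ (i + (n + 1)) = 0 := by
    have hbound : ∀ (a : ℕ → Bool) i, |d (a i)| ≤ |d false| + |d true| := fun a i => by
      cases a i <;> simp
    rw [← hprefix, (hδ.summable_mul hw).sum_add_tsum_nat_add]
    simp only [w, sub_mul]
    rw [(hδ.summable_mul (hbound a)).tsum_sub (hδ.summable_mul (hbound b))]
    exact sub_eq_zero.2 hab
  have htail := hδ.abs_tsum_mul_nat_add_le hw (n + 1)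
  rw [show ∑' i, w (i + (n + 1)) * δ (i + (n + 1)) = -(w n * δ n) by linarith, abs_neg,
    abs_mul, (hdigit _ _).2 (Nat.find_spec hex), abs_of_pos (hδ.pos n)] at htail
  nlinarith [hδ.pos n, hδ.succ_le n]

end IsThirdDecreasing

theorem exists_kTimes_subset_of_tsum_mem {k : ℕ} (hk : 0 < k) {δ : ℕ → ℝ}
    (hδ : IsThirdDecreasing δ) {c : ℝ} {Z : Set ℝ}
    (hZ : ∀ s : ℕ → ℕ, (∀ n, s n ∈ Icc k (2 * k)) → c + ∑' n, (s n : ℝ) * δ n ∈ Z) :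
    ∃ H : Set ℝ, #H = 𝔠 ∧ kTimes k H ⊆ Z := by
  set d : Bool → ℕ := fun b => b.toNat + 1
  have hd : ∀ b, |(d b : ℝ)| ≤ 2 := fun b => by cases b <;> norm_num [d]
  set g : (ℕ → Bool) → ℝ := fun a => c / k + ∑' n, (d (a n) : ℝ) * δ n
  have hg : Function.Injective g :=
    (add_right_injective _).comp
      (hδ.injective_tsum_mul (d := fun b => (d b : ℝ)) (by norm_num [d]))
  refine ⟨range g, by rw [mk_range_eq g hg]; simp, ?_⟩
  rintro y ⟨f, hf, rfl⟩
  choose a ha using hf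
  set s : ℕ → ℕ := fun n => ∑ i, d (a i n)
  have hs : ∀ n, s n ∈ Icc k (2 * k) := fun n => by
    constructor
    · simpa using Finset.card_nsmul_le_sum Finset.univ (fun i => d (a i n)) 1
        fun i _ => by simp [d]
    · simpa [mul_comm] using Finset.sum_le_card_nsmul Finset.univ (fun i => d (a i n)) 2
        fun i _ => by cases a i n <;> simp [d]
  convert hZ s hs using 1
  calc ∑ i, f i = ∑ i, g (a i) := by simp [ha]
    _ = c + ∑' n, (s n : ℝ) * δ n := by
      simp only [g, Finset.sum_add_distrib, Finset.sum_const, Finset.card_univ, Fintype.card_fin,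
        nsmul_eq_mul]
      rw [← Summable.tsum_finsetSum fun i _ => hδ.summable_mul fun n => hd _]
      push_cast [s, Finset.sum_mul]
      field_simp

-- `scaleState n` is the set of partial sums of length `n` together with the last chosen scale;
-- `next n P ρ` is the scale chosen at stage `n` below the bound `ρ`.
noncomputable def scaleState (k : ℕ) (c : ℝ) (next : ℕ → Set ℝ → ℝ → ℝ) : ℕ → Set ℝ × ℝ
  | 0 => ({c}, 3)
  | n + 1 =>
    let x := next n (scaleState k c next n).1 ((scaleState k c next n).2 / 3)
    (image2 (fun p (m : ℕ) => p + m * x) (scaleState k c next n).1 (Icc k (2 * k)), x)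

theorem exists_isThirdDecreasing_forall_mem {k : ℕ} {c : ℝ} {W : ℕ → Set ℝ}
    {R : ℕ → ℝ → ℝ → Prop} (hc : c ∈ W 0)
    (hstep : ∀ n P, P.Finite → P ⊆ W n →
      ∃ᶠ x in 𝓝[>] 0, ∀ p ∈ P, (∀ m ∈ Icc k (2 * k), p + m * x ∈ W (n + 1)) ∧ R n p x) :
    ∃ δ, IsThirdDecreasing δ ∧ ∀ s : ℕ → ℕ, (∀ n, s n ∈ Icc k (2 * k)) → ∀ n,
      c + ∑ i ∈ Finset.range n, (s i : ℝ) * δ i ∈ W n ∧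
        R n (c + ∑ i ∈ Finset.range n, (s i : ℝ) * δ i) (δ n) := by
  have hchoice : ∀ n P (ρ : ℝ), P.Finite → P ⊆ W n → 0 < ρ → ∃ x ∈ Ioo 0 ρ,
      ∀ p ∈ P, (∀ m ∈ Icc k (2 * k), p + m * x ∈ W (n + 1)) ∧ R n p x :=
    fun n P ρ hP hPW hρ =>
      let ⟨x, hx, hxρ⟩ := ((hstep n P hP hPW).and_eventually (Ioo_mem_nhdsGT hρ)).exists
      ⟨x, hxρ, hx⟩
  choose! next hnext_mem hnext using hchoice
  set S := scaleState k c next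
  have hS : ∀ n, (S n).1.Finite ∧ (S n).1 ⊆ W n ∧ 0 < (S n).2 := by
    intro n
    induction n with
    | zero => exact ⟨finite_singleton c, singleton_subset_iff.2 hc, three_pos⟩
    | succ n ih =>
      obtain ⟨hfin, hW, hpos⟩ := ih
      refine ⟨hfin.image2 _ (finite_Icc _ _), ?_, (hnext_mem n _ _ hfin hW (by positivity)).1⟩
      rintro _ ⟨p, hp, m, hm, rfl⟩
      exact (hnext n _ _ hfin hW (by positivity) p hp).1 m hm
  have hρ : ∀ n, 0 < (S n).2 / 3 := fun n => div_pos (hS n).2.2 three_pos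
  refine ⟨fun n => (S (n + 1)).2, ⟨fun n => (hS (n + 1)).2.2, fun n => ?_⟩, fun s hs n => ?_⟩
  · exact (hnext_mem (n + 1) _ _ (hS (n + 1)).1 (hS (n + 1)).2.1 (hρ (n + 1))).2.le
  · have hmem : ∀ n, c + ∑ i ∈ Finset.range n, (s i : ℝ) * (S (i + 1)).2 ∈ (S n).1 := by
      intro n
      induction n with
      | zero => simp [S, scaleState]
      | succ n ih =>
        rw [Finset.sum_range_succ, ← add_assoc]
        exact mem_image2_of_mem ih (hs n)
    exact ⟨(hS n).2.1 (hmem n), (hnext n _ _ (hS n).1 (hS n).2.1 (hρ n) _ (hmem n)).2⟩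

def IsDensityPoint (A : Set ℝ) (p : ℝ) : Prop :=
  Tendsto (fun r => volume (closedBall p r \ A) / volume (closedBall p r)) (𝓝[>] 0) (𝓝 0)

namespace IsDensityPoint

variable {A B : Set ℝ} {p : ℝ}

theorem of_measure_diff_eq_zero (h : IsDensityPoint A p) (hAB : volume (A \ B) = 0) :
    IsDensityPoint B p := by
  refine tendsto_of_tendsto_of_tendsto_of_le_of_le tendsto_const_nhds h (fun _ => zero_le)
    fun r => ?_
  gcongr ?_ / _
  exact measure_mono_ae (EventuallyLE.diff (EventuallyLE.refl _ _) (ae_le_set.2 hAB))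

theorem inter (hA : IsDensityPoint A p) (hB : IsDensityPoint B p) :
    IsDensityPoint (A ∩ B) p := by
  have hsum := hA.add hB
  rw [add_zero] at hsum
  refine tendsto_of_tendsto_of_tendsto_of_le_of_le tendsto_const_nhds hsum (fun _ => zero_le)
    fun r => ?_
  rw [← ENNReal.add_div, sdiff_inter]
  gcongr ?_ / _
  exact measure_union_le _ _

theorem biInter {ι : Type*} {I : Set ι} (hI : I.Finite) {S : ι → Set ℝ}
    (h : ∀ i ∈ I, IsDensityPoint (S i) p) : IsDensityPoint (⋂ i ∈ I, S i) p := by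
  induction I, hI using Set.Finite.induction_on with
  | empty => simp [IsDensityPoint]
  | insert _ _ ih =>
    rw [biInter_insert]
    exact (h _ (mem_insert _ _)).inter (ih fun i hi => h i (mem_insert_of_mem _ hi))

theorem preimage_add_mul (h : IsDensityPoint A p) {m : ℝ} (hm : 0 < m) :
    IsDensityPoint ((fun x => p + m * x) ⁻¹' A) 0 := by
  have hvol : ∀ E, volume ((fun x => p + m * x) ⁻¹' E) = ENNReal.ofReal m⁻¹ * volume E := by
    intro E
    rw [show (fun x => p + m * x) ⁻¹' E = (m * ·) ⁻¹' ((p + ·) ⁻¹' E) from rfl,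
      Real.volume_preimage_mul_left hm.ne', measure_preimage_add, abs_of_pos (inv_pos.2 hm)]
  have hball : ∀ r, (fun x => p + m * x) ⁻¹' closedBall p (m * r) = closedBall 0 r := by
    intro r
    ext x
    simp [abs_of_pos hm, mul_le_mul_iff_right₀ hm]
  have hratio : (fun r => volume (closedBall 0 r \ (fun x => p + m * x) ⁻¹' A) /
      volume (closedBall (0 : ℝ) r)) =
      fun r => volume (closedBall p (m * r) \ A) / volume (closedBall p (m * r)) := by
    ext r
    rw [← hball, ← preimage_sdiff, hvol, hvol, ENNReal.mul_div_mul_left _ _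
      (by simpa using hm) ENNReal.ofReal_ne_top]
  rw [IsDensityPoint, hratio]
  exact h.comp (tendsto_iff_comap.2 (comap_mulLeft_nhdsGT_zero hm).ge)

theorem frequently_mem (h : IsDensityPoint A p) : ∃ᶠ x in 𝓝[>] p, x ∈ A := by
  rw [(nhdsGT_basis p).frequently_iff]
  intro q hq
  obtain ⟨r, hr, hrq⟩ := ((h.eventually (gt_mem_nhds (by norm_num : (0 : ℝ≥0∞) < 2⁻¹))).and
    (Ioo_mem_nhdsGT (sub_pos.2 hq))).exists
  by_contra! hA
  -- then `(p, p + r)`, half of `closedBall p r`, misses `A`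
  have hsub : Ioo p (p + r) ⊆ closedBall p r \ A := fun x hx =>
    ⟨by rw [Real.closedBall_eq_Icc]; exact ⟨by linarith [hx.1], hx.2.le⟩,
      hA x ⟨hx.1, by linarith [hx.2, hrq.2]⟩⟩
  have hball : volume (closedBall p r) = 2 * ENNReal.ofReal r := by
    rw [Real.volume_closedBall, ENNReal.ofReal_mul zero_le_two, ENNReal.ofReal_ofNat]
  have hball_ne_top : volume (closedBall p r) ≠ ⊤ := measure_closedBall_lt_top.ne
  rw [ENNReal.div_lt_iff (Or.inl (by simp [hball, hrq.1])) (Or.inl hball_ne_top), hball,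
    ← mul_assoc, ENNReal.inv_mul_cancel two_ne_zero ENNReal.ofNat_ne_top, one_mul] at hr
  have hle := measure_mono (μ := volume) hsub
  rw [Real.volume_Ioo, add_sub_cancel_left] at hle
  exact hle.not_gt hr

end IsDensityPoint

theorem ae_isDensityPoint {K : Set ℝ} (hK : MeasurableSet K) :
    ∀ᵐ x, x ∈ K → IsDensityPoint K x := by
  filter_upwards [Besicovitch.ae_tendsto_measure_inter_div_of_measurableSet volume hK.compl]
    with x hx hxK
  simpa [IsDensityPoint, sdiff_eq, inter_comm, hxK] using hx

theorem exists_closure_subset_forall_isDensityPoint {Z : Set ℝ} (hZ : NullMeasurableSet Z)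
    (hpos : 0 < volume Z) :
    ∃ A : Set ℝ, A.Nonempty ∧ closure A ⊆ Z ∧ ∀ p ∈ A, IsDensityPoint A p := by
  obtain ⟨T, hTZ, hT, hTZ_ae⟩ := hZ.exists_measurable_subset_ae_eq
  obtain ⟨K, hKT, hK, hKpos⟩ := hT.exists_lt_isCompact (by rwa [measure_congr hTZ_ae])
  set A := {x ∈ K | IsDensityPoint K x}
  have hKA : volume (K \ A) = 0 := by
    refine measure_mono_null (fun x hx => ?_) (ae_iff.1 (ae_isDensityPoint hK.measurableSet))
    simp_all [A]
  refine ⟨A, nonempty_of_measure_ne_zero (μ := volume) fun hA => hKpos.ne' ?_,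
    (closure_minimal (sep_subset _ _) hK.isClosed).trans (hKT.trans hTZ),
    fun p hp => hp.2.of_measure_diff_eq_zero hKA⟩
  exact measure_mono_null (fun x hx => (em (x ∈ A)).imp_right fun h => ⟨hx, h⟩)
    (measure_union_null hA hKA)

theorem frequently_forall_add_mul_mem {A : Set ℝ} (hA : ∀ p ∈ A, IsDensityPoint A p)
    {P : Set ℝ} (hP : P.Finite) (hPA : P ⊆ A) {k : ℕ} (hk : 0 < k) :
    ∃ᶠ x in 𝓝[>] 0, ∀ p ∈ P, ∀ m ∈ Icc k (2 * k), p + m * x ∈ A := by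
  have h : IsDensityPoint (⋂ p ∈ P, ⋂ m ∈ Icc k (2 * k), (fun x => p + (m : ℝ) * x) ⁻¹' A) 0 :=
    IsDensityPoint.biInter hP fun p hp => IsDensityPoint.biInter (finite_Icc _ _) fun m hm =>
      (hA p (hPA hp)).preimage_add_mul (Nat.cast_pos.2 (hk.trans_le hm.1))
  exact h.frequently_mem.mono fun x hx p hp m hm => by
    simp only [mem_iInter₂, mem_preimage] at hx
    exact hx p hp m hm

theorem exists_tsum_mem_of_volume_pos {Z : Set ℝ} (hZ : NullMeasurableSet Z)
    (hpos : 0 < volume Z) {k : ℕ} (hk : 0 < k) :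
    ∃ c δ, IsThirdDecreasing δ ∧
      ∀ s : ℕ → ℕ, (∀ n, s n ∈ Icc k (2 * k)) → c + ∑' n, (s n : ℝ) * δ n ∈ Z := by
  obtain ⟨A, ⟨c, hc⟩, hAZ, hA⟩ := exists_closure_subset_forall_isDensityPoint hZ hpos
  obtain ⟨δ, hδ, hmem⟩ := exists_isThirdDecreasing_forall_mem (W := fun _ => A)
    (R := fun _ _ _ => True) hc fun n P hP hPA =>
      (frequently_forall_add_mul_mem hA hP hPA hk).mono fun x hx p hp => ⟨hx p hp, trivial⟩
  refine ⟨c, δ, hδ, fun s hs => hAZ (mem_closure_of_tendsto (b := atTop) ?_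
    (Eventually.of_forall fun n => (hmem s hs n).1))⟩
  have hsB : ∀ n, |(s n : ℝ)| ≤ 2 * k := fun n => by
    rw [Nat.abs_cast]; exact_mod_cast (hs n).2
  exact tendsto_const_nhds.add (hδ.summable_mul hsB).hasSum.tendsto_sum_nat

theorem exists_seq_isOpen_dense_iInter_subset_compl {X : Type*} [TopologicalSpace X]
    {M : Set X} (hM : IsMeagre M) :
    ∃ O : ℕ → Set X, (∀ n, IsOpen (O n)) ∧ (∀ n, Dense (O n)) ∧ ⋂ n, O n ⊆ Mᶜ := by
  obtain ⟨S, hSo, hSd, hSc, hSM⟩ := mem_residual_iff.1 hM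
  obtain ⟨O, hO⟩ := (hSc.insert Set.univ).exists_eq_range (insert_nonempty _ _)
  have hOS : ∀ n, O n = Set.univ ∨ O n ∈ S := fun n => by
    simpa [← hO] using mem_range_self (f := O) n
  refine ⟨O, fun n => ?_, fun n => ?_, fun x hx => hSM fun t ht => ?_⟩
  · rcases hOS n with h | h
    · exact h ▸ isOpen_univ
    · exact hSo _ h
  · rcases hOS n with h | h
    · exact h ▸ dense_univ
    · exact hSd _ h
  · obtain ⟨n, rfl⟩ : t ∈ range O := hO ▸ mem_insert_of_mem _ ht
    exact mem_iInter.1 hx n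

theorem isOpenMap_add_mul (p : ℝ) {m : ℝ} (hm : m ≠ 0) : IsOpenMap fun x => p + m * x :=
  ((Homeomorph.mulLeft₀ m hm).trans (Homeomorph.addLeft p)).isOpenMap

theorem Dense.frequently_nhdsGT {s : Set ℝ} (hs : Dense s) (a : ℝ) : ∃ᶠ x in 𝓝[>] a, x ∈ s :=
  (nhdsGT_basis a).frequently_iff.2 fun _ hb =>
    (hs.exists_mem_open isOpen_Ioo (nonempty_Ioo.2 hb)).imp fun _ => And.symm

theorem frequently_forall_add_mul_mem_inter {W O : Set ℝ} (hW : IsOpen W) (hO : IsOpen O)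
    (hOd : Dense O) {P : Set ℝ} (hP : P.Finite) (hPW : P ⊆ W) {k : ℕ} (hk : 0 < k) :
    ∃ᶠ x in 𝓝[>] 0, ∀ p ∈ P,
      (∀ m ∈ Icc k (2 * k), p + m * x ∈ W ∩ O) ∧ closedBall p (3 * k * x) ⊆ W := by
  have hmargin : ∀ᶠ x in 𝓝[>] (0 : ℝ), ∀ p ∈ P, closedBall p (3 * k * x) ⊆ W := by
    have hlim : Tendsto (fun x : ℝ => 3 * k * x) (𝓝[>] 0) (𝓝 0) :=
      ((continuous_const.mul continuous_id).tendsto' 0 0 (by simp)).mono_left nhdsWithin_le_nhds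
    exact (hP.eventually_all).2 fun p hp =>
      hlim.eventually (eventually_closedBall_subset (hW.mem_nhds (hPW hp)))
  have hdense : Dense (⋂ p ∈ P, ⋂ m ∈ Icc k (2 * k), (fun x => p + (m : ℝ) * x) ⁻¹' O) := by
    have hm : ∀ m ∈ Icc k (2 * k), (m : ℝ) ≠ 0 := fun m hm =>
      (Nat.cast_pos.2 (hk.trans_le hm.1)).ne'
    refine dense_biInter_of_isOpen (fun p _ => ?_) hP.countable fun p _ => ?_
    · exact (finite_Icc _ _).isOpen_biInter fun m _ => hO.preimage (by fun_prop)
    · exact dense_biInter_of_isOpen (fun m _ => hO.preimage (by fun_prop))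
        (finite_Icc _ _).countable fun m hm' => hOd.preimage (isOpenMap_add_mul p (hm m hm'))
  refine ((hdense.frequently_nhdsGT 0).and_eventually (hmargin.and self_mem_nhdsWithin)).mono
    fun x ⟨hxO, hxW, hx⟩ p hp => ⟨fun m hm => ⟨hxW p hp ?_, ?_⟩, hxW p hp⟩
  · have hm : (m : ℝ) ≤ 2 * k := by exact_mod_cast hm.2
    rw [mem_closedBall, dist_self_add_left, Real.norm_eq_abs,
      abs_of_nonneg (by positivity : (0 : ℝ) ≤ m * x)]
    nlinarith [(hx : (0 : ℝ) < x)]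
  · simp only [mem_iInter₂, mem_preimage] at hxO
    exact hxO p hp m hm

theorem exists_tsum_mem_of_not_isMeagre {U M : Set ℝ} (hU : IsOpen U) (hM : IsMeagre M)
    (hUM : ¬IsMeagre (U ∆ M)) {k : ℕ} (hk : 0 < k) :
    ∃ c δ, IsThirdDecreasing δ ∧
      ∀ s : ℕ → ℕ, (∀ n, s n ∈ Icc k (2 * k)) → c + ∑' n, (s n : ℝ) * δ n ∈ U ∆ M := by
  obtain ⟨O, hOo, hOd, hOM⟩ := exists_seq_isOpen_dense_iInter_subset_compl hM
  obtain ⟨c, hc⟩ : U.Nonempty := nonempty_iff_ne_empty.2 fun hU =>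
    hUM (by rwa [hU, ← bot_eq_empty, bot_symmDiff])
  set W : ℕ → Set ℝ := fun n => U ∩ ⋂ j < n, O j
  have hWo : ∀ n, IsOpen (W n) := fun n =>
    hU.inter ((finite_lt_nat n).isOpen_biInter fun j _ => hOo j)
  have hWsucc : ∀ n, W n ∩ O n = W (n + 1) := fun n => by
    simp only [W, biInter_lt_succ, inter_assoc]
  obtain ⟨δ, hδ, hmem⟩ := exists_isThirdDecreasing_forall_mem (W := W)
    (R := fun n p x => closedBall p (3 * k * x) ⊆ W n) (by simpa [W] using hc)
    fun n P hP hPW =>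
      (frequently_forall_add_mul_mem_inter (hWo n) (hOo n) (hOd n) hP hPW hk).mono
        fun x hx p hp => ⟨fun m hm => hWsucc n ▸ (hx p hp).1 m hm, (hx p hp).2⟩
  refine ⟨c, δ, hδ, fun s hs => ?_⟩
  have hsB : ∀ n, |(s n : ℝ)| ≤ 2 * k := fun n => by
    rw [Nat.abs_cast]; exact_mod_cast (hs n).2
  have hW : ∀ n, c + ∑' i, (s i : ℝ) * δ i ∈ W n := fun n => (hmem s hs n).2 <| by
    rw [mem_closedBall, dist_add_left]
    exact (hδ.dist_tsum_sum_range_le hsB n).trans_eq (by ring)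
  refine Or.inl ⟨(hW 0).1, hOM (mem_iInter.2 fun n => ?_)⟩
  have hWn := hW (n + 1)
  rw [← hWsucc n] at hWn
  exact hWn.2

theorem stmt_18_general (k : ℕ) (hk : 2 ≤ k) (Z : Set ℝ)
    (hcase :
      (¬ IsMeagre Z ∧ ∃ (U M : Set ℝ), IsOpen U ∧ IsMeagre M ∧ Z = symmDiff U M) ∨
      (NullMeasurableSet Z volume ∧ 0 < volume Z)) :
    ∃ H : Set ℝ, #H = Cardinal.continuum ∧ kTimes k H ⊆ Z := by
  have hk₀ : 0 < k := by omega
  rcases hcase with ⟨hZ, U, M, hU, hM, rfl⟩ | ⟨hZ, hpos⟩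
  · obtain ⟨c, δ, hδ, hmem⟩ := exists_tsum_mem_of_not_isMeagre hU hM hZ hk₀
    exact exists_kTimes_subset_of_tsum_mem hk₀ hδ hmem
  · obtain ⟨c, δ, hδ, hmem⟩ := exists_tsum_mem_of_volume_pos hZ hpos hk₀
    exact exists_kTimes_subset_of_tsum_mem hk₀ hδ hmem

theorem stmt_18 (k : ℕ) (hk : 2 ≤ k) (Z : Set ℝ) (hZ : Z ⊆ Set.Ioo (0 : ℝ) 1)
    (hcase :
      (¬ IsMeagre Z ∧ ∃ (U M : Set ℝ), IsOpen U ∧ IsMeagre M ∧ Z = symmDiff U M) ∨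
      (NullMeasurableSet Z volume ∧ 0 < volume Z)) :
    ∃ H : Set ℝ, #H = Cardinal.continuum ∧ kTimes k H ⊆ Z :=
  stmt_18_general k hk Z hcase
end

section
/- Let k ≥ 2 and suppose ℝ is countably coloured so that every colour class is Lebesgue measurable. Then there exists H ⊆ ℝ with |H| = 2^{ℵ₀} such that kH is monochromatic. -/
/-!
Some colour class contains a compact set `K` of positive measure. Since translation is continuous
in measure, for a compact `A` of positive measure and all small `δ` the set of `a` with
`a, a + δ, …, a + kδ ∈ A` still has positive measure. Iterating gives nested nonempty compacts
`A (n + 1) = {a | a + jδₙ ∈ A n for j ≤ k}` with `δₙ₊₁ ≤ δₙ / 3`, and a point `a` of their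
intersection satisfies `a + ∑ mᵢ δᵢ ∈ K` for all digits `mᵢ ≤ k` (for infinite sums as well, `K`
being closed). Hence `H = {a / k + ∑ σᵢ δᵢ | σ : ℕ → Bool}` has `kH ⊆ K`, and the fast decay of
`δ` makes `σ ↦ ∑ σᵢ δᵢ` injective, so `#H = 𝔠`.
-/

open Cardinal MeasureTheory

open Set Filter Topology
open scoped ENNReal symmDiff

theorem exists_isCompact_subset_preimage_singleton {X ι : Type*} [TopologicalSpace X]
    [MeasurableSpace X] [Countable ι] {μ : Measure X} [μ.InnerRegular] [NeZero μ] (c : X → ι)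
    (hc : ∀ i, NullMeasurableSet (c ⁻¹' {i}) μ) :
    ∃ i K, K ⊆ c ⁻¹' {i} ∧ IsCompact K ∧ 0 < μ K := by
  have hcover : μ (⋃ i, c ⁻¹' {i}) ≠ 0 := by
    rw [← preimage_iUnion, iUnion_of_singleton, preimage_univ]
    exact Measure.measure_univ_ne_zero.2 (NeZero.ne μ)
  obtain ⟨i, hi⟩ := exists_measure_pos_of_not_measure_iUnion_null hcover
  obtain ⟨t, hts, ht, hteq⟩ := (hc i).exists_measurable_subset_ae_eq
  obtain ⟨K, hKt, hK, hK0⟩ := ht.exists_lt_isCompact (measure_congr hteq ▸ hi)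
  exact ⟨i, K, hKt.trans hts, hK, hK0⟩

theorem tendsto_measure_preimage_add_symmDiff {G : Type*} [AddGroup G] [TopologicalSpace G]
    [IsTopologicalAddGroup G] [LocallyCompactSpace G] [MeasurableSpace G] [BorelSpace G]
    {μ : Measure G} [μ.IsAddRightInvariant] [μ.InnerRegularCompactLTTop]
    [IsLocallyFiniteMeasure μ] {s : Set G} (hs : NullMeasurableSet s μ) (hs' : μ s ≠ ∞) :
    Tendsto (fun t : G => μ (((· + t) ⁻¹' s) ∆ s)) (𝓝 0) (𝓝 0) := by
  let shift : C(G, C(G, G)) := ContinuousMap.curry ⟨fun p : G × G => p.2 + p.1, by fun_prop⟩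
  have hshift (t : G) : ⇑(shift t) = (· + t) := rfl
  have h := tendsto_measure_symmDiff_preimage_nhds_zero (shift.continuous.tendsto 0)
    (.of_forall fun t => measurePreserving_add_right μ t) (measurePreserving_add_right μ 0) hs hs'
  simpa only [hshift, add_zero, preimage_id'] using h

def progressionStarts (A : Set ℝ) (k : ℕ) (δ : ℝ) : Set ℝ :=
  {a | ∀ j ≤ k, a + j * δ ∈ A}

theorem progressionStarts_subset (A : Set ℝ) (k : ℕ) (δ : ℝ) : progressionStarts A k δ ⊆ A :=
  fun a ha => by simpa using ha 0 k.zero_le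

theorem IsClosed.progressionStarts {A : Set ℝ} (hA : IsClosed A) (k : ℕ) (δ : ℝ) :
    IsClosed (progressionStarts A k δ) := by
  simp only [_root_.progressionStarts, ofPred_forall]
  exact isClosed_biInter fun j _ => hA.preimage (by fun_prop)

theorem IsCompact.progressionStarts {A : Set ℝ} (hA : IsCompact A) (k : ℕ) (δ : ℝ) :
    IsCompact (progressionStarts A k δ) :=
  hA.of_isClosed_subset (hA.isClosed.progressionStarts k δ) (progressionStarts_subset A k δ)

theorem eventually_volume_progressionStarts_ne_zero {A : Set ℝ} (hA : NullMeasurableSet A)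
    (hA0 : volume A ≠ 0) (hA' : volume A ≠ ∞) (k : ℕ) :
    ∀ᶠ δ in 𝓝 0, volume (progressionStarts A k δ) ≠ 0 := by
  have hsmall : ∀ᶠ δ in 𝓝 (0 : ℝ),
      ∑ j ∈ Finset.range (k + 1), volume (((· + (j : ℝ) * δ) ⁻¹' A) ∆ A) < volume A := by
    have hlim : Tendsto (fun δ : ℝ => ∑ j ∈ Finset.range (k + 1),
        volume (((· + (j : ℝ) * δ) ⁻¹' A) ∆ A)) (𝓝 0) (𝓝 0) := by
      simpa using tendsto_finsetSum _ fun (j : ℕ) _ =>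
        (tendsto_measure_preimage_add_symmDiff hA hA').comp
          (by simpa using (tendsto_id (x := 𝓝 (0 : ℝ))).const_mul (j : ℝ))
    exact hlim.eventually_lt_const (pos_iff_ne_zero.2 hA0)
  filter_upwards [hsmall] with δ hδ hzero
  have hbad : A \ progressionStarts A k δ ⊆
      ⋃ j ∈ Finset.range (k + 1), ((· + (j : ℝ) * δ) ⁻¹' A) ∆ A := by
    rintro a ⟨haA, ha⟩
    simp only [_root_.progressionStarts, mem_ofPred_eq, not_forall] at ha
    obtain ⟨j, hj, hjA⟩ := ha
    exact mem_biUnion (Finset.mem_range.2 (Nat.lt_succ_of_le hj)) (Or.inr ⟨haA, hjA⟩)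
  refine hδ.not_ge ?_
  calc volume A
      ≤ volume (A ∩ progressionStarts A k δ) + volume (A \ progressionStarts A k δ) :=
        measure_le_inter_add_sdiff _ _ _
    _ = volume (A \ progressionStarts A k δ) := by
        rw [inter_eq_right.2 (progressionStarts_subset A k δ), hzero, zero_add]
    _ ≤ _ := (measure_mono hbad).trans (measure_biUnion_finset_le _ _)

theorem exists_seq_progressionStarts {K : Set ℝ} (hK : IsCompact K) (hK0 : volume K ≠ 0)
    (k : ℕ) :
    ∃ (A : ℕ → Set ℝ) (δ : ℕ → ℝ), A 0 = K ∧ (∀ n, IsCompact (A n) ∧ (A n).Nonempty) ∧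
      (∀ n, A (n + 1) = progressionStarts (A n) k (δ n)) ∧
      (∀ n, 0 < δ n) ∧ ∀ n, δ (n + 1) ≤ δ n / 3 := by
  -- `p.2` bounds the next step size; it is set to `δ / 3` after a step of size `δ`.
  let State := {p : Set ℝ × ℝ // IsCompact p.1 ∧ volume p.1 ≠ 0 ∧ 0 < p.2}
  have hstep (p : State) : ∃ δ ∈ Ioo 0 p.1.2, volume (progressionStarts p.1.1 k δ) ≠ 0 :=
    ((eventually_volume_progressionStarts_ne_zero p.2.1.measurableSet.nullMeasurableSet
      p.2.2.1 p.2.1.measure_lt_top.ne k).filter_mono nhdsWithin_le_nhds).and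
      (Ioo_mem_nhdsGT p.2.2.2) |>.exists.imp fun δ h => ⟨h.2, h.1⟩
  choose δ hδ hδA using hstep
  let next (p : State) : State :=
    ⟨(progressionStarts p.1.1 k (δ p), δ p / 3), p.2.1.progressionStarts k _, hδA p,
      by linarith [(hδ p).1]⟩
  let seq (n : ℕ) : State := Nat.rec ⟨(K, 1), hK, hK0, one_pos⟩ (fun _ => next) n
  exact ⟨fun n => (seq n).1.1, fun n => δ (seq n), rfl,
    fun n => ⟨(seq n).2.1, nonempty_of_measure_ne_zero (seq n).2.2.1⟩, fun n => rfl,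
    fun n => (hδ _).1, fun n => (hδ (seq (n + 1))).2.le⟩

theorem add_sum_mem_of_subset_progressionStarts {A : ℕ → Set ℝ} {δ : ℕ → ℝ} {k : ℕ}
    (hA : ∀ n, A (n + 1) ⊆ progressionStarts (A n) k (δ n)) {n : ℕ} {a : ℝ} (ha : a ∈ A n)
    {m : ℕ → ℕ} (hm : ∀ i, m i ≤ k) : a + ∑ i ∈ Finset.range n, m i * δ i ∈ A 0 := by
  induction n generalizing a with
  | zero => simpa using ha
  | succ n ih =>
    rw [Finset.sum_range_succ, add_comm _ (_ * _), ← add_assoc]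
    exact ih (hA n ha (m n) (hm n))

theorem exists_add_sum_mem {K : Set ℝ} (hK : IsCompact K) (hK0 : volume K ≠ 0) (k : ℕ) :
    ∃ (a : ℝ) (δ : ℕ → ℝ), (∀ n, 0 < δ n) ∧ (∀ n, δ (n + 1) ≤ δ n / 3) ∧
      ∀ n (m : ℕ → ℕ), (∀ i, m i ≤ k) → a + ∑ i ∈ Finset.range n, m i * δ i ∈ K := by
  obtain ⟨A, δ, rfl, hA, hrec, hδ, hδ3⟩ := exists_seq_progressionStarts hK hK0 k
  obtain ⟨a, ha⟩ := IsCompact.nonempty_iInter_of_sequence_nonempty_isCompact_isClosed A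
    (fun n => hrec n ▸ progressionStarts_subset _ _ _) (fun n => (hA n).2) (hA 0).1
    (fun n => (hA n).1.isClosed)
  exact ⟨a, δ, hδ, hδ3, fun n m hm => add_sum_mem_of_subset_progressionStarts (fun n => (hrec n).le)
    (mem_iInter.1 ha n) hm⟩

section CantorSum

variable {δ : ℕ → ℝ}

noncomputable def cantorSum (δ : ℕ → ℝ) (σ : ℕ → Bool) : ℝ :=
  ∑' i, ((σ i).toNat : ℝ) * δ i

theorem summable_of_le_div_three (hδ : ∀ n, 0 ≤ δ n) (hδ3 : ∀ n, δ (n + 1) ≤ δ n / 3) :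
    Summable δ :=
  summable_of_ratio_norm_eventually_le (r := 1 / 3) (by norm_num) <| .of_forall fun n => by
    rw [Real.norm_of_nonneg (hδ _), Real.norm_of_nonneg (hδ _)]
    linarith [hδ3 n]

theorem summable_toNat_mul (hδ : ∀ n, 0 ≤ δ n) (hsum : Summable δ) (σ : ℕ → Bool) :
    Summable fun i => ((σ i).toNat : ℝ) * δ i :=
  hsum.of_nonneg_of_le (fun i => mul_nonneg (Nat.cast_nonneg _) (hδ i)) fun i =>
    mul_le_of_le_one_left (hδ i) (by exact_mod_cast Bool.toNat_le _)

theorem tsum_nat_add_succ_le_half (hδ : ∀ n, 0 ≤ δ n) (hδ3 : ∀ n, δ (n + 1) ≤ δ n / 3)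
    (n : ℕ) : ∑' i, δ (i + (n + 1)) ≤ δ n / 2 := by
  have hgeom (i : ℕ) : δ (i + (n + 1)) ≤ (1 / 3) ^ i * (δ n / 3) := by
    have := le_geom (u := fun j => δ (n + 1 + j)) (c := 1 / 3) (by norm_num) i fun j _ => by
      simp only [← add_assoc]; linarith [hδ3 (n + 1 + j)]
    rw [add_comm i]
    exact this.trans (mul_le_mul_of_nonneg_left (hδ3 n) (by positivity))
  calc ∑' i, δ (i + (n + 1)) ≤ ∑' i : ℕ, (1 / 3) ^ i * (δ n / 3) :=
        ((summable_nat_add_iff _).2 (summable_of_le_div_three hδ hδ3)).tsum_le_tsum hgeom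
          ((summable_geometric_of_lt_one (by norm_num) (by norm_num)).mul_right _)
    _ = δ n / 2 := by
        rw [tsum_mul_right, tsum_geometric_of_lt_one (by norm_num) (by norm_num)]
        ring

theorem cantorSum_injective (hδ : ∀ n, 0 < δ n) (hδ3 : ∀ n, δ (n + 1) ≤ δ n / 3) :
    Function.Injective (cantorSum δ) := by
  intro σ τ hστ
  by_contra hne
  have hex : ∃ n, σ n ≠ τ n := Function.ne_iff.1 hne
  let n := Nat.find hex
  have hδ0 (i : ℕ) : 0 ≤ δ i := (hδ i).le
  have hsum := summable_of_le_div_three hδ0 hδ3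
  let d i := ((σ i).toNat : ℝ) * δ i - (τ i).toNat * δ i
  have hσ := summable_toNat_mul hδ0 hsum σ
  have hτ := summable_toNat_mul hδ0 hsum τ
  have hd_abs (i : ℕ) : |d i| ≤ δ i := by
    simp only [d]
    cases σ i <;> cases τ i <;> simp [abs_of_nonneg (hδ0 i), hδ0 i]
  have hdn : |d n| = δ n := by
    have := Nat.find_spec hex
    simp only [d]
    revert this
    cases σ n <;> cases τ n <;> simp [abs_of_pos (hδ n)]
  have hhead : ∑ i ∈ Finset.range (n + 1), d i = d n := by
    rw [Finset.sum_range_succ, Finset.sum_eq_zero fun i hi => ?_, zero_add]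
    simp [d, not_not.1 (Nat.find_min hex (Finset.mem_range.1 hi))]
  have htail : |∑' i, d (i + (n + 1))| ≤ δ n / 2 := by
    have hd_tail := (summable_nat_add_iff (n + 1)).2 (hσ.sub hτ)
    calc |∑' i, d (i + (n + 1))| ≤ ∑' i, |d (i + (n + 1))| :=
          norm_tsum_le_tsum_norm hd_tail.norm
      _ ≤ ∑' i, δ (i + (n + 1)) :=
          hd_tail.abs.tsum_le_tsum (fun i => hd_abs _) ((summable_nat_add_iff (n + 1)).2 hsum)
      _ ≤ δ n / 2 := tsum_nat_add_succ_le_half hδ0 hδ3 n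
  have hsplit := (hσ.sub hτ).sum_add_tsum_nat_add (n + 1)
  rw [hσ.tsum_sub hτ, hhead] at hsplit
  have : |d n| = |∑' i, d (i + (n + 1))| := by
    rw [eq_neg_of_add_eq_zero_left (hsplit.trans (sub_eq_zero.2 hστ)), abs_neg]
  linarith [hδ n]

end CantorSum

theorem kTimes_range_cantorSum_subset {K : Set ℝ} (hK : IsClosed K) {k : ℕ} (hk : k ≠ 0)
    {a : ℝ} {δ : ℕ → ℝ} (hδ0 : ∀ n, 0 ≤ δ n) (hsum : Summable δ)
    (hmem : ∀ n (m : ℕ → ℕ), (∀ i, m i ≤ k) → a + ∑ i ∈ Finset.range n, m i * δ i ∈ K) :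
    kTimes k (range fun σ => a / k + cantorSum δ σ) ⊆ K := by
  rintro y ⟨f, hf, rfl⟩
  choose σ hσ using hf
  let m i := ∑ t, (σ t i).toNat
  have hm (i : ℕ) : m i ≤ k :=
    (Finset.sum_le_sum fun t _ => Bool.toNat_le _).trans (by simp)
  have hsum_m : Summable fun i => (m i : ℝ) * δ i :=
    (hsum.mul_left (k : ℝ)).of_nonneg_of_le (fun i => mul_nonneg (Nat.cast_nonneg _) (hδ0 i))
      fun i => mul_le_mul_of_nonneg_right (by exact_mod_cast hm i) (hδ0 i)
  have hy : ∑ t, f t = a + ∑' i, (m i : ℝ) * δ i := by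
    simp only [← hσ, cantorSum, Finset.sum_add_distrib, Finset.sum_const, Finset.card_univ,
      Fintype.card_fin, nsmul_eq_mul, m, Nat.cast_sum, Finset.sum_mul]
    rw [Summable.tsum_finsetSum fun t _ => summable_toNat_mul hδ0 hsum (σ t)]
    field_simp
  rw [hy]
  exact hK.mem_of_tendsto (tendsto_const_nhds.add hsum_m.hasSum.tendsto_sum_nat)
    (.of_forall fun n => hmem n m hm)

theorem stmt_19 (k : ℕ) (hk : 2 ≤ k) (c : ℝ → ℕ)
    (hc : ∀ i : ℕ, NullMeasurableSet (c ⁻¹' {i}) volume) :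
    ∃ H : Set ℝ, #H = Cardinal.continuum ∧ ∃ i : ℕ, ∀ y ∈ kTimes k H, c y = i := by
  obtain ⟨i, K, hKc, hK, hK0⟩ := exists_isCompact_subset_preimage_singleton c hc
  obtain ⟨a, δ, hδ, hδ3, hmem⟩ := exists_add_sum_mem hK hK0.ne' k
  refine ⟨range fun σ => a / k + cantorSum δ σ, ?_, i, fun y hy => ?_⟩
  · rw [mk_range_eq _ fun σ τ h => cantorSum_injective hδ hδ3 (add_left_cancel h)]
    simp
  · exact hKc (kTimes_range_cantorSum_subset hK.isClosed (by omega) (fun n => (hδ n).le)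
      (summable_of_le_div_three (fun n => (hδ n).le) hδ3) hmem hy)
end
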